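/- arXiv:2412.05919 — 9 statements merged into one kernel-verified Lean document; each statement's English description precedes it below -/
import Mathlib

section
/- Let (Ω,F,P) be a probability space, p ∈ (0,1), γ : Ω → ℕ an integrable random variable, and T : Ω → ℕ an integrable random variable with T ≤ γ pointwise and with conditional expectation E[T | σ(γ)] = p·γ almost surely. Define the imputed treated-neighbor fraction D̄* : Ω → ℝ by D̄*(ω) = T(ω)/γ(ω) if γ(ω) > 0 and D̄*(ω) = 0 if γ(ω) = 0, and assume D̄*, γ·D̄* are integrable. If P(γ > 0) > 0, then Cov(D̄*, γ) = (E[γ | γ > 0] − E[γ]) · p · P(γ > 0), where E[γ | γ > 0] denotes P(γ > 0)⁻¹ · E[γ·1{γ > 0}]. -/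
/-!
Conditioning on `γ`, the identity `E[T | γ] = p γ` gives `E[T] = p E[γ]`, and pulling the
`σ(γ)`-measurable factor `γ⁻¹` out of the conditional expectation gives
`E[D̄* | γ] = p · 1{γ > 0}`, hence `E[D̄*] = p P(γ > 0)`. Since `T = 0` where `γ = 0`,
`D̄* γ = T`, and `E[γ 1{γ > 0}] = E[γ]`; the covariance formula is then algebra.
-/

open MeasureTheory ProbabilityTheory

section CondExpProportional

variable {Ω : Type*} {m mΩ : MeasurableSpace Ω} {P : Measure Ω}
  {X Y : Ω → ℝ} {c : ℝ}

lemma integral_eq_const_mul_integral_of_condExp_eq (hm : m ≤ mΩ) [SigmaFinite (P.trim hm)]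
    (h : P[X | m] =ᵐ[P] fun ω => c * Y ω) : ∫ ω, X ω ∂P = c * ∫ ω, Y ω ∂P := by
  rw [← integral_condExp hm, integral_congr_ae h, integral_const_mul]

lemma condExp_inv_mul_eq_indicator_of_condExp_eq (hY : StronglyMeasurable[m] Y)
    (hX : Integrable X P) (hYX : Integrable (fun ω => (Y ω)⁻¹ * X ω) P)
    (h : P[X | m] =ᵐ[P] fun ω => c * Y ω) :
    P[fun ω => (Y ω)⁻¹ * X ω | m] =ᵐ[P] {ω | Y ω ≠ 0}.indicator fun _ => c := by
  have hYinv : StronglyMeasurable[m] fun ω => (Y ω)⁻¹ :=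
    hY.measurable.inv.stronglyMeasurable
  filter_upwards [condExp_mul_of_stronglyMeasurable_left hYinv hYX hX, h] with ω hpull hω
  change P[(fun ω => (Y ω)⁻¹) * X | m] ω = _
  rw [hpull, Pi.mul_apply, hω]
  by_cases hY0 : Y ω = 0
  · simp [hY0]
  · simp [hY0, mul_left_comm]

lemma integral_inv_mul_eq_of_condExp_eq (hm : m ≤ mΩ) [SigmaFinite (P.trim hm)]
    (hY : StronglyMeasurable[m] Y)
    (hX : Integrable X P) (hYX : Integrable (fun ω => (Y ω)⁻¹ * X ω) P)
    (h : P[X | m] =ᵐ[P] fun ω => c * Y ω) :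
    ∫ ω, (Y ω)⁻¹ * X ω ∂P = c * P.real {ω | Y ω ≠ 0} := by
  have hmeas : MeasurableSet {ω | Y ω ≠ 0} :=
    hm _ (hY.measurable (measurableSet_singleton 0).compl)
  rw [← integral_condExp hm, integral_congr_ae (condExp_inv_mul_eq_indicator_of_condExp_eq
    hY hX hYX h), integral_indicator_const _ hmeas, smul_eq_mul, mul_comm]

end CondExpProportional

lemma ite_pos_natCast_div_eq_inv_mul (a b : ℕ) :
    (if 0 < b then (a : ℝ) / b else 0) = (b : ℝ)⁻¹ * a := by
  rcases Nat.eq_zero_or_pos b with rfl | hb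
  · simp
  · simp [hb, div_eq_inv_mul]

lemma natCast_inv_mul_mul_of_le {a b : ℕ} (h : a ≤ b) : (b : ℝ)⁻¹ * a * b = a := by
  rcases Nat.eq_zero_or_pos b with rfl | hb
  · simp [Nat.le_zero.mp h]
  · field_simp

theorem stmt0_general
    {Ω : Type*} [MeasurableSpace Ω] (P : Measure Ω) [IsProbabilityMeasure P]
    (p : ℝ)
    (γ T : Ω → ℕ) (hγmeas : Measurable γ)
    (hTint : Integrable (fun ω => (T ω : ℝ)) P)
    (hTγ : ∀ ω, T ω ≤ γ ω)
    (hcond : P[fun ω => (T ω : ℝ) | MeasurableSpace.comap γ inferInstance]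
      =ᵐ[P] fun ω => p * (γ ω : ℝ))
    (Dstar : Ω → ℝ)
    (hDstar : ∀ ω, Dstar ω = if 0 < γ ω then (T ω : ℝ) / (γ ω : ℝ) else 0)
    (hDint : Integrable Dstar P)
    (hpos : 0 < P {ω | 0 < γ ω}) :
    (∫ ω, Dstar ω * (γ ω : ℝ) ∂P) - (∫ ω, Dstar ω ∂P) * (∫ ω, (γ ω : ℝ) ∂P)
      = ((P {ω | 0 < γ ω}).toReal⁻¹ * (∫ ω in {ω | 0 < γ ω}, (γ ω : ℝ) ∂P)
          - ∫ ω, (γ ω : ℝ) ∂P) * p * (P {ω | 0 < γ ω}).toReal := by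
  have hm := hγmeas.comap_le
  have hγm : StronglyMeasurable[MeasurableSpace.comap γ inferInstance] fun ω => (γ ω : ℝ) :=
    (measurable_from_top.comp (Measurable.of_comap_le le_rfl)).stronglyMeasurable
  have hD : Dstar = fun ω => (γ ω : ℝ)⁻¹ * T ω :=
    funext fun ω => (hDstar ω).trans (ite_pos_natCast_div_eq_inv_mul _ _)
  have hDγ : ∫ ω, Dstar ω * (γ ω : ℝ) ∂P = ∫ ω, (T ω : ℝ) ∂P := by
    simp only [hD, natCast_inv_mul_mul_of_le (hTγ _)]
  have hED : ∫ ω, Dstar ω ∂P = p * P.real {ω | 0 < γ ω} := by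
    subst hD
    simpa [pos_iff_ne_zero] using integral_inv_mul_eq_of_condExp_eq hm hγm hTint hDint hcond
  have hsγ : ∫ ω in {ω | 0 < γ ω}, (γ ω : ℝ) ∂P = ∫ ω, (γ ω : ℝ) ∂P :=
    setIntegral_eq_integral_of_forall_compl_eq_zero fun ω hω => by simp_all
  have hq : (P {ω | 0 < γ ω}).toReal ≠ 0 :=
    ENNReal.toReal_ne_zero.mpr ⟨hpos.ne', measure_ne_top P _⟩
  rw [hDγ, integral_eq_const_mul_integral_of_condExp_eq hm hcond, hED, hsγ, measureReal_def]
  field_simp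

/-- With `D̄*` the imputed treated-neighbor fraction (set to 0 on isolated
nodes), `Cov(D̄*, γ) = (E[γ | γ > 0] − E[γ]) · p · P(γ > 0)`. -/
theorem stmt0
    {Ω : Type*} [MeasurableSpace Ω] (P : Measure Ω) [IsProbabilityMeasure P]
    (p : ℝ) (hp0 : 0 < p) (hp1 : p < 1)
    (γ T : Ω → ℕ) (hγmeas : Measurable γ) (hTmeas : Measurable T)
    (hγint : Integrable (fun ω => (γ ω : ℝ)) P)
    (hTint : Integrable (fun ω => (T ω : ℝ)) P)
    (hTγ : ∀ ω, T ω ≤ γ ω)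
    (hcond : P[fun ω => (T ω : ℝ) | MeasurableSpace.comap γ inferInstance]
      =ᵐ[P] fun ω => p * (γ ω : ℝ))
    (Dstar : Ω → ℝ)
    (hDstar : ∀ ω, Dstar ω = if 0 < γ ω then (T ω : ℝ) / (γ ω : ℝ) else 0)
    (hDint : Integrable Dstar P)
    (hγDint : Integrable (fun ω => (γ ω : ℝ) * Dstar ω) P)
    (hpos : 0 < P {ω | 0 < γ ω}) :
    (∫ ω, Dstar ω * (γ ω : ℝ) ∂P) - (∫ ω, Dstar ω ∂P) * (∫ ω, (γ ω : ℝ) ∂P)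
      = ((P {ω | 0 < γ ω}).toReal⁻¹ * (∫ ω in {ω | 0 < γ ω}, (γ ω : ℝ) ∂P)
          - ∫ ω, (γ ω : ℝ) ∂P) * p * (P {ω | 0 < γ ω}).toReal :=
  stmt0_general P p γ T hγmeas hTint hTγ hcond Dstar hDstar hDint hpos
end

section
/- Let (Ω,F,P) be a probability space, p ∈ (0,1), γ : Ω → ℕ integrable, and T : Ω → ℕ integrable with T ≤ γ pointwise and E[T | σ(γ)] = p·γ almost surely. Define D̄*(ω) = T(ω)/γ(ω) if γ(ω) > 0 and D̄*(ω) = 0 otherwise, and assume D̄*, γ·D̄* are integrable. If P(γ = 0) > 0, P(γ > 0) > 0, and E[γ] > 0, then Cov(D̄*, γ) > 0; in particular, the imputed fraction of treated neighbors is positively correlated with the degree whenever isolated nodes are present with positive probability. -/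
/-!
On `{γ > 0}` one has `D̄* = γ⁻¹ T` with `γ⁻¹` a function of `γ`, so pulling it out of
`E[T | γ] = p γ` gives `E[D̄*] = p P(γ > 0)`, while `D̄* γ = T` gives `E[D̄* γ] = p E[γ]`.
Hence `Cov(D̄*, γ) = p E[γ] P(γ = 0)`, which is positive.
-/

open MeasureTheory ProbabilityTheory

section

variable {Ω : Type*} {m m₀ : MeasurableSpace Ω} {μ : Measure[m₀] Ω}

theorem integral_mul_eq_integral_mul_condExp (hm : m ≤ m₀) [SigmaFinite (μ.trim hm)]
    {f g : Ω → ℝ} (hf : StronglyMeasurable[m] f) (hfg : Integrable (f * g) μ)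
    (hg : Integrable g μ) :
    ∫ ω, f ω * g ω ∂μ = ∫ ω, f ω * μ[g | m] ω ∂μ := by
  rw [← integral_condExp hm]
  exact integral_congr_ae (condExp_mul_of_stronglyMeasurable_left hf hfg hg)

theorem integral_inv_mul_self {X : Ω → ℝ} (hX : Measurable X) :
    ∫ ω, (X ω)⁻¹ * X ω ∂μ = μ.real {ω | X ω ≠ 0} := by
  have h_indicator : (fun ω => (X ω)⁻¹ * X ω) = {ω | X ω ≠ 0}.indicator 1 := by
    ext ω
    by_cases h : X ω = 0 <;> simp [h]
  rw [h_indicator]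
  exact integral_indicator_one (hX (measurableSet_singleton 0).compl)

theorem integral_div_of_condExp_eq_const_mul (hm : m ≤ m₀) [SigmaFinite (μ.trim hm)]
    {T X : Ω → ℝ} {p : ℝ} (hX : StronglyMeasurable[m] X) (hT : Integrable T μ)
    (hTX : Integrable (fun ω => T ω / X ω) μ) (hcond : μ[T | m] =ᵐ[μ] fun ω => p * X ω) :
    ∫ ω, T ω / X ω ∂μ = p * μ.real {ω | X ω ≠ 0} := by
  simp_rw [div_eq_inv_mul] at hTX ⊢
  have hX_inv : StronglyMeasurable[m] fun ω => (X ω)⁻¹ := hX.measurable.inv.stronglyMeasurable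
  calc ∫ ω, (X ω)⁻¹ * T ω ∂μ
      = ∫ ω, (X ω)⁻¹ * (p * X ω) ∂μ := by
        rw [integral_mul_eq_integral_mul_condExp hm hX_inv hTX hT]
        refine integral_congr_ae ?_
        filter_upwards [hcond] with ω hω
        rw [hω]
    _ = p * ∫ ω, (X ω)⁻¹ * X ω ∂μ := by
        simp_rw [mul_left_comm _ p]
        exact integral_const_mul p _
    _ = p * μ.real {ω | X ω ≠ 0} := by
        rw [integral_inv_mul_self (hX.mono hm).measurable]

end

theorem stmt1_general
    {Ω : Type*} [MeasurableSpace Ω] (P : Measure Ω) [IsProbabilityMeasure P]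
    (p : ℝ) (hp0 : 0 < p)
    (γ T : Ω → ℕ) (hγmeas : Measurable γ)
    (hTint : Integrable (fun ω => (T ω : ℝ)) P)
    (hTγ : ∀ ω, T ω ≤ γ ω)
    (hcond : P[fun ω => (T ω : ℝ) | MeasurableSpace.comap γ inferInstance]
      =ᵐ[P] fun ω => p * (γ ω : ℝ))
    (Dstar : Ω → ℝ)
    (hDstar : ∀ ω, Dstar ω = if 0 < γ ω then (T ω : ℝ) / (γ ω : ℝ) else 0)
    (hDint : Integrable Dstar P)
    (hiso : 0 < P {ω | γ ω = 0})
    (hEγ : 0 < ∫ ω, (γ ω : ℝ) ∂P) :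
    0 < (∫ ω, Dstar ω * (γ ω : ℝ) ∂P) - (∫ ω, Dstar ω ∂P) * (∫ ω, (γ ω : ℝ) ∂P) := by
  have hm := hγmeas.comap_le
  -- Division by zero is `0` in Lean, so the case split in `hDstar` is redundant.
  have hD : Dstar = fun ω => (T ω : ℝ) / γ ω := funext fun ω => by
    rw [hDstar]
    split_ifs with h
    · rfl
    · simp [Nat.eq_zero_of_not_pos h]
  have hDγ : ∀ ω, Dstar ω * γ ω = T ω := fun ω => by
    rcases Nat.eq_zero_or_pos (γ ω) with h | h
    · simp [hD, h, Nat.le_zero.mp (h ▸ hTγ ω)]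
    · simp [hD, div_mul_cancel₀ (T ω : ℝ) (Nat.cast_ne_zero.mpr h.ne')]
  have hE_Dγ : ∫ ω, Dstar ω * γ ω ∂P = p * ∫ ω, (γ ω : ℝ) ∂P := by
    simp_rw [hDγ]
    rw [← integral_condExp hm, integral_congr_ae hcond, integral_const_mul]
  have hE_D : ∫ ω, Dstar ω ∂P = p * (1 - P.real {ω | γ ω = 0}) := by
    have hγ_comap : StronglyMeasurable[MeasurableSpace.comap γ inferInstance] fun ω => (γ ω : ℝ) :=
      (measurable_from_nat.comp (comap_measurable γ)).stronglyMeasurable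
    have h_support : {ω | (γ ω : ℝ) ≠ 0} = {ω | γ ω = 0}ᶜ := by ext; simp
    rw [hD, integral_div_of_condExp_eq_const_mul hm hγ_comap hTint (hD ▸ hDint) hcond,
      h_support, probReal_compl_eq_one_sub (measurableSet_eq_fun hγmeas measurable_const)]
  have hiso_real : 0 < P.real {ω | γ ω = 0} :=
    ENNReal.toReal_pos hiso.ne' (measure_ne_top P _)
  have hcov : (∫ ω, Dstar ω * γ ω ∂P) - (∫ ω, Dstar ω ∂P) * (∫ ω, (γ ω : ℝ) ∂P)
      = p * P.real {ω | γ ω = 0} * ∫ ω, (γ ω : ℝ) ∂P := by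
    rw [hE_Dγ, hE_D]
    ring
  rw [hcov]
  exact mul_pos (mul_pos hp0 hiso_real) hEγ

/-- The imputed treated-neighbor fraction `D̄*` is positively correlated
with the degree `γ` whenever isolated nodes are present with positive probability. -/
theorem stmt1
    {Ω : Type*} [MeasurableSpace Ω] (P : Measure Ω) [IsProbabilityMeasure P]
    (p : ℝ) (hp0 : 0 < p) (hp1 : p < 1)
    (γ T : Ω → ℕ) (hγmeas : Measurable γ) (hTmeas : Measurable T)
    (hγint : Integrable (fun ω => (γ ω : ℝ)) P)
    (hTint : Integrable (fun ω => (T ω : ℝ)) P)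
    (hTγ : ∀ ω, T ω ≤ γ ω)
    (hcond : P[fun ω => (T ω : ℝ) | MeasurableSpace.comap γ inferInstance]
      =ᵐ[P] fun ω => p * (γ ω : ℝ))
    (Dstar : Ω → ℝ)
    (hDstar : ∀ ω, Dstar ω = if 0 < γ ω then (T ω : ℝ) / (γ ω : ℝ) else 0)
    (hDint : Integrable Dstar P)
    (hγDint : Integrable (fun ω => (γ ω : ℝ) * Dstar ω) P)
    (hiso : 0 < P {ω | γ ω = 0})
    (hpos : 0 < P {ω | 0 < γ ω})
    (hEγ : 0 < ∫ ω, (γ ω : ℝ) ∂P) :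
    0 < (∫ ω, Dstar ω * (γ ω : ℝ) ∂P) - (∫ ω, Dstar ω ∂P) * (∫ ω, (γ ω : ℝ) ∂P) :=
  stmt1_general P p hp0 γ T hγmeas hTint hTγ hcond Dstar hDstar hDint hiso hEγ
end

section
/- Let (Ω,F,P) be a probability space, Y : ℕ → ℕ → Ω → ℝ a family of integrable random variables (potential outcomes), D : Ω → {0,1} measurable, and γ, T : Ω → ℕ measurable with T ≤ γ pointwise. Let 𝒢 = σ(γ) and ℋ = σ(D, T, γ), and assume the observed outcome Yobs(ω) := Y (D ω) (T ω) (ω) is measurable and integrable. Assume: (i) [randomization] for all d ∈ {0,1} and t ∈ ℕ, E[Y d t | ℋ] = E[Y d t | 𝒢] almost surely; (ii) [no interaction, A2] for all t ∈ ℕ, E[Y 1 t − Y 0 t | 𝒢] = E[Y 1 0 − Y 0 0 | 𝒢] almost everywhere on the event {t ≤ γ}; (iii) [linearity in t, A3] there is a 𝒢-measurable integrable random variable Λ such that for all d ∈ {0,1} and all t ≥ 1, E[Y d t − Y d (t−1) | 𝒢] = Λ almost everywhere on {t ≤ γ}. Then, almost surely, E[Yobs | ℋ] = E[Y 0 0 |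 𝒢] + D · E[Y 1 0 − Y 0 0 | 𝒢] + T · Λ. -/
/-!
On the event `{D = d, T = t}` the observed outcome coincides with `Y d t`, and this event lies in
`σ(D, T, γ)`, so `E[Yobs | σ(D, T, γ)] = E[Y d t | σ(D, T, γ)] = E[Y d t | σ(γ)]` there by
randomization. Telescoping the constant increments `Λ` from `0` to `t ≤ γ` gives
`E[Y d t | σ(γ)] = E[Y d 0 | σ(γ)] + t Λ`, and for `d ∈ {0, 1}` one has
`E[Y d 0 | σ(γ)] = θ⁰⁰ + d μᵈᵉ`.
-/

open MeasureTheory ProbabilityTheory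

theorem ae_eq_add_mul_of_ae_sub_eq {Ω : Type*} [MeasurableSpace Ω] {μ : Measure Ω}
    {F : ℕ → Ω → ℝ} {N : Ω → ℕ} {Λ : Ω → ℝ}
    (hstep : ∀ t : ℕ, ∀ᵐ ω ∂μ, t + 1 ≤ N ω → F (t + 1) ω - F t ω = Λ ω) :
    ∀ᵐ ω ∂μ, ∀ t ≤ N ω, F t ω = F 0 ω + t * Λ ω := by
  filter_upwards [ae_all_iff.mpr hstep] with ω hstep t ht
  induction t with
  | zero => simp
  | succ t ih =>
    have := hstep t ht
    push_cast
    linarith [ih (by omega)]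

section CondExp

variable {Ω : Type*} {m m0 : MeasurableSpace Ω} {μ : Measure Ω}

theorem condExp_sub_ae_eq_sub {f g : Ω → ℝ} (hf : Integrable f μ) (hg : Integrable g μ) :
    ∀ᵐ ω ∂μ, μ[fun x => f x - g x | m] ω = μ[f | m] ω - μ[g | m] ω :=
  condExp_sub hf hg m

theorem condExp_ae_eq_restrict_of_ae_eq_restrict {f g : Ω → ℝ} {s : Set Ω}
    (hf : Integrable f μ) (hg : Integrable g μ) (hs : MeasurableSet[m] s)
    (hfg : f =ᵐ[μ.restrict s] g) : μ[f | m] =ᵐ[μ.restrict s] μ[g | m] := by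
  have hsub : μ[f - g | m] =ᵐ[μ.restrict s] 0 :=
    condExp_ae_eq_restrict_zero hs hfg.sub_eq
  filter_upwards [hsub, ae_restrict_of_ae (condExp_sub hf hg m)] with ω h0 hsub
  rw [hsub, Pi.sub_apply] at h0
  exact sub_eq_zero.mp h0

theorem condExp_select_ae_eq {ι : Type*} [Countable ι] [MeasurableSpace ι]
    [MeasurableSingletonClass ι] (hm : m ≤ m0) {X : ι → Ω → ℝ} (hX : ∀ i, Integrable (X i) μ)
    {I : Ω → ι} (hI : Measurable[m] I) (hXI : Integrable (fun ω => X (I ω) ω) μ) :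
    μ[fun ω => X (I ω) ω | m] =ᵐ[μ] fun ω => μ[X (I ω) | m] ω := by
  have hfiber : ∀ i, ∀ᵐ ω ∂μ, I ω = i → μ[fun ω => X (I ω) ω | m] ω = μ[X i | m] ω := by
    intro i
    have hs : MeasurableSet[m] (I ⁻¹' {i}) := hI (measurableSet_singleton i)
    have hXI_eq : (fun ω => X (I ω) ω) =ᵐ[μ.restrict (I ⁻¹' {i})] X i := by
      filter_upwards [ae_restrict_mem (hm _ hs)] with ω (hω : I ω = i)
      rw [hω]
    exact (ae_restrict_iff' (hm _ hs)).mp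
      (condExp_ae_eq_restrict_of_ae_eq_restrict hXI (hX i) hs hXI_eq)
  filter_upwards [ae_all_iff.mpr hfiber] with ω h
  exact h (I ω) rfl

theorem condExp_ae_eq_add_mul_of_increments {F : ℕ → Ω → ℝ} (hF : ∀ t, Integrable (F t) μ)
    {N : Ω → ℕ} {Λ : Ω → ℝ}
    (hinc : ∀ t : ℕ, 1 ≤ t → ∀ᵐ ω ∂μ, t ≤ N ω → μ[fun x => F t x - F (t - 1) x | m] ω = Λ ω) :
    ∀ᵐ ω ∂μ, ∀ t ≤ N ω, μ[F t | m] ω = μ[F 0 | m] ω + t * Λ ω := by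
  refine ae_eq_add_mul_of_ae_sub_eq fun t => ?_
  filter_upwards [hinc (t + 1) (by omega), condExp_sub_ae_eq_sub (hF (t + 1)) (hF t)]
    with ω hΛ hsub ht
  rw [← hsub]
  simpa using hΛ ht

end CondExp

theorem stmt4_general
    {Ω : Type*} [MeasurableSpace Ω] (P : Measure Ω)
    (Y : ℕ → ℕ → Ω → ℝ) (hYint : ∀ d t, Integrable (Y d t) P)
    (D : Ω → ℕ) (hD01 : ∀ ω, D ω ≤ 1) (hDmeas : Measurable D)
    (γ T : Ω → ℕ) (hγmeas : Measurable γ) (hTmeas : Measurable T)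
    (hTγ : ∀ ω, T ω ≤ γ ω)
    (Yobs : Ω → ℝ) (hYobs : ∀ ω, Yobs ω = Y (D ω) (T ω) ω)
    (hYobsint : Integrable Yobs P)
    -- (i) randomization
    (hrand : ∀ d ≤ 1, ∀ t : ℕ,
      (P[Y d t | MeasurableSpace.comap (fun ω => (D ω, T ω, γ ω)) inferInstance])
        =ᵐ[P] (P[Y d t | MeasurableSpace.comap γ inferInstance]))
    -- (iii) constant incremental spillover effect (A3)
    (Λ : Ω → ℝ)
    (hlin : ∀ d ≤ 1, ∀ t : ℕ, 1 ≤ t → ∀ᵐ ω ∂P, t ≤ γ ω →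
      (P[fun ω' => Y d t ω' - Y d (t - 1) ω' | MeasurableSpace.comap γ inferInstance]) ω
        = Λ ω) :
    (P[Yobs | MeasurableSpace.comap (fun ω => (D ω, T ω, γ ω)) inferInstance])
      =ᵐ[P] fun ω =>
        (P[Y 0 0 | MeasurableSpace.comap γ inferInstance]) ω
        + (D ω : ℝ) *
          (P[fun ω' => Y 1 0 ω' - Y 0 0 ω' | MeasurableSpace.comap γ inferInstance]) ω
        + (T ω : ℝ) * Λ ω := by
  obtain rfl : Yobs = fun ω => Y (D ω) (T ω) ω := funext hYobs
  have hselect := condExp_select_ae_eq (μ := P) (X := fun p : ℕ × ℕ => Y p.1 p.2)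
    (hDmeas.prodMk (hTmeas.prodMk hγmeas)).comap_le (fun p => hYint p.1 p.2)
    (I := fun ω => (D ω, T ω))
    ((measurable_fst.prodMk measurable_snd.fst).comp (comap_measurable _)) hYobsint
  have hlinear : ∀ d ≤ 1, ∀ᵐ ω ∂P, ∀ t ≤ γ ω,
      P[Y d t | MeasurableSpace.comap (fun ω => (D ω, T ω, γ ω)) inferInstance] ω
        = P[Y d 0 | MeasurableSpace.comap γ inferInstance] ω + t * Λ ω := by
    intro d hd
    filter_upwards [condExp_ae_eq_add_mul_of_increments (hYint d) (hlin d hd),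
      ae_all_iff.mpr (hrand d hd)] with ω hsteps hrand t ht
    rw [hrand, hsteps t ht]
  filter_upwards [hselect, hlinear 0 zero_le_one, hlinear 1 le_rfl,
    condExp_sub_ae_eq_sub (m := MeasurableSpace.comap γ inferInstance) (hYint 1 0) (hYint 0 0)]
    with ω hselect hlinear₀ hlinear₁ hsub
  rw [hselect, hsub]
  rcases Nat.le_one_iff_eq_zero_or_eq_one.mp (hD01 ω) with hD | hD
  · rw [hD, hlinear₀ _ (hTγ ω)]
    push_cast
    ring
  · rw [hD, hlinear₁ _ (hTγ ω)]
    push_cast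
    ring

/-- Theorem 1: Under randomization (i), no interaction (ii) and
linearity in `t` (iii), the observed outcome satisfies, almost surely,
`E[Yobs | σ(D,T,γ)] = θ⁰⁰ + D·μᵈᵉ + T·Λ` where `θ⁰⁰ = E[Y 0 0 | σ(γ)]`,
`μᵈᵉ = E[Y 1 0 − Y 0 0 | σ(γ)]` and `Λ` is the conditional spillover effect. -/
theorem stmt4
    {Ω : Type*} [MeasurableSpace Ω] (P : Measure Ω) [IsProbabilityMeasure P]
    (Y : ℕ → ℕ → Ω → ℝ) (hYint : ∀ d t, Integrable (Y d t) P)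
    (D : Ω → ℕ) (hD01 : ∀ ω, D ω ≤ 1) (hDmeas : Measurable D)
    (γ T : Ω → ℕ) (hγmeas : Measurable γ) (hTmeas : Measurable T)
    (hTγ : ∀ ω, T ω ≤ γ ω)
    (Yobs : Ω → ℝ) (hYobs : ∀ ω, Yobs ω = Y (D ω) (T ω) ω)
    (hYobsmeas : Measurable Yobs) (hYobsint : Integrable Yobs P)
    -- (i) randomization
    (hrand : ∀ d ≤ 1, ∀ t : ℕ,
      (P[Y d t | MeasurableSpace.comap (fun ω => (D ω, T ω, γ ω)) inferInstance])
        =ᵐ[P] (P[Y d t | MeasurableSpace.comap γ inferInstance]))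
    -- (ii) no interaction between own treatment and others' treatments (A2)
    (hnoint : ∀ t : ℕ, ∀ᵐ ω ∂P, t ≤ γ ω →
      (P[fun ω' => Y 1 t ω' - Y 0 t ω' | MeasurableSpace.comap γ inferInstance]) ω
        = (P[fun ω' => Y 1 0 ω' - Y 0 0 ω' | MeasurableSpace.comap γ inferInstance]) ω)
    -- (iii) constant incremental spillover effect (A3)
    (Λ : Ω → ℝ)
    (hΛmeas : Measurable[MeasurableSpace.comap γ inferInstance] Λ)
    (hΛint : Integrable Λ P)
    (hlin : ∀ d ≤ 1, ∀ t : ℕ, 1 ≤ t → ∀ᵐ ω ∂P, t ≤ γ ω →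
      (P[fun ω' => Y d t ω' - Y d (t - 1) ω' | MeasurableSpace.comap γ inferInstance]) ω
        = Λ ω) :
    (P[Yobs | MeasurableSpace.comap (fun ω => (D ω, T ω, γ ω)) inferInstance])
      =ᵐ[P] fun ω =>
        (P[Y 0 0 | MeasurableSpace.comap γ inferInstance]) ω
        + (D ω : ℝ) *
          (P[fun ω' => Y 1 0 ω' - Y 0 0 ω' | MeasurableSpace.comap γ inferInstance]) ω
        + (T ω : ℝ) * Λ ω :=
  stmt4_general P Y hYint D hD01 hDmeas γ T hγmeas hTmeas hTγ Yobs hYobs hYobsint hrand Λ hlin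
end

section
/- Let (Ω,F,P) be a probability space, Y : ℕ → ℕ → Ω → ℝ a family of integrable random variables (potential outcomes), D : Ω → {0,1} measurable, and γ, T : Ω → ℕ measurable with T ≤ γ pointwise. Let 𝒢 = σ(γ) and ℋ = σ(D, T, γ), and assume the observed outcome Yobs(ω) := Y (D ω) (T ω) (ω) is measurable and integrable. Assume: (i) for all d ∈ {0,1} and t ∈ ℕ, E[Y d t | ℋ] = E[Y d t | 𝒢] almost surely; (ii) for all t ∈ ℕ, E[Y 1 t − Y 0 t | 𝒢] = E[Y 1 0 − Y 0 0 | 𝒢] almost everywhere on {t ≤ γ}. For t ≥ 1 set Λ_t := E[Y 0 t − Y 0 (t−1) | 𝒢]. Then, almost surely, E[Yobs | ℋ] = E[Y 0 0 | 𝒢] + Σ_{t=1}^{γ} 1{T ≥ t} · Λ_t + D · E[Y 1 0 − Y 0 0 | 𝒢]. -/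
/-!
Conditioning on `σ(D, T, γ)` fixes the index `(D, T)` at which the observed outcome reads the
potential outcomes, so `E[Yobs | σ(D, T, γ)] = E[Y D T | σ(D, T, γ)]`, and randomization replaces
this by `E[Y D T | σ(γ)]`. Writing `E[Y 0 T | σ(γ)]` as `E[Y 0 0 | σ(γ)]` plus the telescoping
sum of the increments `Λ_t` up to `T`, and the treatment effect at `T ≤ γ` as the one at `0`
by the no-interaction assumption, gives the decomposition.
-/

open MeasureTheory ProbabilityTheory

section CondExp

variable {Ω E : Type*} [NormedAddCommGroup E] [NormedSpace ℝ E] [CompleteSpace E]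
  {m m₀ : MeasurableSpace Ω} {μ : Measure Ω}

theorem condExp_ae_eq_of_eqOn {f g : Ω → E} {s : Set Ω} (hs : MeasurableSet[m] s)
    (hf : Integrable f μ) (hg : Integrable g μ) (hfg : Set.EqOn f g s) :
    ∀ᵐ ω ∂μ, ω ∈ s → μ[f | m] ω = μ[g | m] ω := by
  have hind : s.indicator (μ[f | m]) =ᵐ[μ] s.indicator (μ[g | m]) := by
    refine (condExp_indicator hf hs).symm.trans ?_
    rw [Set.indicator_congr hfg]
    exact condExp_indicator hg hs
  filter_upwards [hind] with ω hω hmem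
  simpa [Set.indicator_of_mem hmem] using hω

theorem condExp_comp_index_ae_eq {ι : Type*} [Countable ι] [MeasurableSpace ι]
    [MeasurableSingletonClass ι] {X : ι → Ω → E} {K : Ω → ι} (hK : Measurable[m] K)
    (hX : ∀ i, Integrable (X i) μ) (hXK : Integrable (fun ω => X (K ω) ω) μ) :
    μ[fun ω => X (K ω) ω | m] =ᵐ[μ] fun ω => μ[X (K ω) | m] ω := by
  have hlevel : ∀ᵐ ω ∂μ, ∀ i, ω ∈ K ⁻¹' {i} → μ[fun ω => X (K ω) ω | m] ω = μ[X i | m] ω :=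
    ae_all_iff.2 fun i =>
      condExp_ae_eq_of_eqOn (hK (measurableSet_singleton i)) hXK (hX i) fun ω hω => by
        simp only [Set.mem_singleton_iff.mp hω]
  filter_upwards [hlevel] with ω hω
  exact hω (K ω) rfl

end CondExp

theorem Finset.sum_Icc_one_sub_pred {G : Type*} [AddCommGroup G] (f : ℕ → G) (n : ℕ) :
    ∑ t ∈ Finset.Icc 1 n, (f t - f (t - 1)) = f n - f 0 := by
  induction n with
  | zero => simp
  | succ n ih =>
    rw [Finset.sum_Icc_succ_top (by omega), ih]
    simp

theorem Finset.sum_Icc_ite_le_mul_sub_pred {R : Type*} [Ring R] (f : ℕ → R) {T n : ℕ} (hTn : T ≤ n) :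
    ∑ t ∈ Finset.Icc 1 n, (if t ≤ T then (1 : R) else 0) * (f t - f (t - 1)) = f T - f 0 := by
  simp only [ite_mul, one_mul, zero_mul]
  rw [← Finset.sum_filter]
  have hfilter : (Finset.Icc 1 n).filter (· ≤ T) = Finset.Icc 1 T := by
    ext t
    simp only [Finset.mem_filter, Finset.mem_Icc]
    omega
  rw [hfilter, Finset.sum_Icc_one_sub_pred]

theorem stmt5_general
    {Ω : Type*} [MeasurableSpace Ω] (P : Measure Ω)
    (Y : ℕ → ℕ → Ω → ℝ) (hYint : ∀ d t, Integrable (Y d t) P)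
    (D : Ω → ℕ) (hD01 : ∀ ω, D ω ≤ 1)
    (γ T : Ω → ℕ)
    (hTγ : ∀ ω, T ω ≤ γ ω)
    (Yobs : Ω → ℝ) (hYobs : ∀ ω, Yobs ω = Y (D ω) (T ω) ω)
    (hYobsint : Integrable Yobs P)
    -- (i) randomization
    (hrand : ∀ d ≤ 1, ∀ t : ℕ,
      (P[Y d t | MeasurableSpace.comap (fun ω => (D ω, T ω, γ ω)) inferInstance])
        =ᵐ[P] (P[Y d t | MeasurableSpace.comap γ inferInstance]))
    -- (ii) no interaction between own treatment and others' treatments (A2)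
    (hnoint : ∀ t : ℕ, ∀ᵐ ω ∂P, t ≤ γ ω →
      (P[fun ω' => Y 1 t ω' - Y 0 t ω' | MeasurableSpace.comap γ inferInstance]) ω
        = (P[fun ω' => Y 1 0 ω' - Y 0 0 ω' | MeasurableSpace.comap γ inferInstance]) ω) :
    (P[Yobs | MeasurableSpace.comap (fun ω => (D ω, T ω, γ ω)) inferInstance])
      =ᵐ[P] fun ω =>
        (P[Y 0 0 | MeasurableSpace.comap γ inferInstance]) ω
        + (∑ t ∈ Finset.Icc 1 (γ ω), (if t ≤ T ω then (1 : ℝ) else 0) *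
            (P[fun ω' => Y 0 t ω' - Y 0 (t - 1) ω' |
                MeasurableSpace.comap γ inferInstance]) ω)
        + (D ω : ℝ) *
          (P[fun ω' => Y 1 0 ω' - Y 0 0 ω' | MeasurableSpace.comap γ inferInstance]) ω := by
  set mG := MeasurableSpace.comap γ inferInstance
  set mH := MeasurableSpace.comap (fun ω => (D ω, T ω, γ ω)) inferInstance
  obtain rfl : Yobs = fun ω => Y (D ω) (T ω) ω := funext hYobs
  have hDT : Measurable[mH] fun ω => (D ω, T ω) :=
    (measurable_fst.prodMk (measurable_fst.comp measurable_snd)).comp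
      (Measurable.of_comap_le le_rfl)
  have hobs : P[fun ω => Y (D ω) (T ω) ω | mH] =ᵐ[P] fun ω => P[Y (D ω) (T ω) | mH] ω :=
    condExp_comp_index_ae_eq (X := fun p : ℕ × ℕ => Y p.1 p.2) hDT (fun p => hYint _ _) hYobsint
  have hrand_ae : ∀ᵐ ω ∂P, ∀ d ≤ 1, ∀ t, P[Y d t | mH] ω = P[Y d t | mG] ω :=
    ae_all_iff.2 fun d => Filter.eventually_imp_distrib_left.2 fun hd => ae_all_iff.2 (hrand d hd)
  have hΛ : ∀ᵐ ω ∂P, ∀ t, P[fun ω' => Y 0 t ω' - Y 0 (t - 1) ω' | mG] ω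
      = P[Y 0 t | mG] ω - P[Y 0 (t - 1) | mG] ω :=
    ae_all_iff.2 fun t => condExp_sub (hYint 0 t) (hYint 0 (t - 1)) mG
  have heffect : ∀ᵐ ω ∂P, ∀ t, P[fun ω' => Y 1 t ω' - Y 0 t ω' | mG] ω
      = P[Y 1 t | mG] ω - P[Y 0 t | mG] ω :=
    ae_all_iff.2 fun t => condExp_sub (hYint 1 t) (hYint 0 t) mG
  filter_upwards [hobs, hrand_ae, hΛ, heffect, ae_all_iff.2 hnoint]
    with ω hobs_ω hrand_ω hΛ_ω heffect_ω hnoint_ω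
  rw [hobs_ω, hrand_ω (D ω) (hD01 ω) (T ω)]
  simp only [hΛ_ω]
  rw [Finset.sum_Icc_ite_le_mul_sub_pred (fun t => P[Y 0 t | mG] ω) (hTγ ω), heffect_ω 0]
  rcases Nat.le_one_iff_eq_zero_or_eq_one.mp (hD01 ω) with hD | hD
  · rw [hD]
    push_cast
    ring
  · have hconst := hnoint_ω (T ω) (hTγ ω)
    rw [heffect_ω, heffect_ω] at hconst
    rw [hD]
    push_cast
    linarith

/-- Under randomization (i) and no interaction (ii), almost surely
`E[Yobs | σ(D,T,γ)] = E[Y 0 0 | σ(γ)] + Σ_{t=1}^{γ} 1{T ≥ t}·Λ_t + D·E[Y 1 0 − Y 0 0 | σ(γ)]`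
where `Λ_t = E[Y 0 t − Y 0 (t−1) | σ(γ)]`. -/
theorem stmt5
    {Ω : Type*} [MeasurableSpace Ω] (P : Measure Ω) [IsProbabilityMeasure P]
    (Y : ℕ → ℕ → Ω → ℝ) (hYint : ∀ d t, Integrable (Y d t) P)
    (D : Ω → ℕ) (hD01 : ∀ ω, D ω ≤ 1) (hDmeas : Measurable D)
    (γ T : Ω → ℕ) (hγmeas : Measurable γ) (hTmeas : Measurable T)
    (hTγ : ∀ ω, T ω ≤ γ ω)
    (Yobs : Ω → ℝ) (hYobs : ∀ ω, Yobs ω = Y (D ω) (T ω) ω)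
    (hYobsmeas : Measurable Yobs) (hYobsint : Integrable Yobs P)
    -- (i) randomization
    (hrand : ∀ d ≤ 1, ∀ t : ℕ,
      (P[Y d t | MeasurableSpace.comap (fun ω => (D ω, T ω, γ ω)) inferInstance])
        =ᵐ[P] (P[Y d t | MeasurableSpace.comap γ inferInstance]))
    -- (ii) no interaction between own treatment and others' treatments (A2)
    (hnoint : ∀ t : ℕ, ∀ᵐ ω ∂P, t ≤ γ ω →
      (P[fun ω' => Y 1 t ω' - Y 0 t ω' | MeasurableSpace.comap γ inferInstance]) ω
        = (P[fun ω' => Y 1 0 ω' - Y 0 0 ω' | MeasurableSpace.comap γ inferInstance]) ω) :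
    (P[Yobs | MeasurableSpace.comap (fun ω => (D ω, T ω, γ ω)) inferInstance])
      =ᵐ[P] fun ω =>
        (P[Y 0 0 | MeasurableSpace.comap γ inferInstance]) ω
        + (∑ t ∈ Finset.Icc 1 (γ ω), (if t ≤ T ω then (1 : ℝ) else 0) *
            (P[fun ω' => Y 0 t ω' - Y 0 (t - 1) ω' |
                MeasurableSpace.comap γ inferInstance]) ω)
        + (D ω : ℝ) *
          (P[fun ω' => Y 1 0 ω' - Y 0 0 ω' | MeasurableSpace.comap γ inferInstance]) ω :=
  stmt5_general P Y hYint D hD01 γ T hTγ Yobs hYobs hYobsint hrand hnoint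
end

section
/- Let (Ω,F,P) be a probability space, Y : ℕ → ℕ → Ω → ℝ a family of integrable random variables (potential outcomes), D : Ω → {0,1} measurable, and γ, T : Ω → ℕ measurable with T ≤ γ pointwise. Let 𝒢 = σ(γ) and ℋ = σ(D, T, γ), and assume the observed outcome Yobs(ω) := Y (D ω) (T ω) (ω) is measurable and integrable. Assume that for all d ∈ {0,1} and t ∈ ℕ, E[Y d t | ℋ] = E[Y d t | 𝒢] almost surely. For d ∈ {0,1} and t ≥ 1 set Λᵈ_t := E[Y d t − Y d (t−1) | 𝒢]. Then, almost surely, E[Yobs | ℋ] = E[Y 0 0 | 𝒢] + Σ_{t=1}^{γ} 1{T ≥ t}·Λ⁰_t + D · ( E[Y 1 0 − Y 0 0 | 𝒢] + Σ_{t=1}^{γ} 1{T ≥ t}·(Λ¹_t − Λ⁰_t) ). -/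
open MeasureTheory ProbabilityTheory

lemma telescope_aux (f : ℕ → ℝ) : ∀ m : ℕ, ∑ s ∈ Finset.Icc 1 m, (f s - f (s - 1)) = f m - f 0 := by
  intro m
  induction m with
  | zero => simp
  | succ n ih =>
    rw [Finset.sum_Icc_succ_top (by omega), ih]
    simp

lemma telescope (f : ℕ → ℝ) {t n : ℕ} (h : t ≤ n) :
    ∑ s ∈ Finset.Icc 1 n, (if s ≤ t then (1 : ℝ) else 0) * (f s - f (s - 1)) = f t - f 0 := by
  rw [← Finset.sum_subset (Finset.Icc_subset_Icc_right h)
    (fun x hxn hxt => by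
      simp only [Finset.mem_Icc] at hxn hxt
      rw [if_neg (by omega), zero_mul])]
  rw [← telescope_aux f t]
  refine Finset.sum_congr rfl fun x hx => ?_
  simp only [Finset.mem_Icc] at hx
  rw [if_pos hx.2, one_mul]

/-- Under randomization alone, almost surely
`E[Yobs | σ(D,T,γ)] = E[Y 0 0 | σ(γ)] + Σ_{t=1}^{γ} 1{T ≥ t}·Λ⁰_t
  + D·(E[Y 1 0 − Y 0 0 | σ(γ)] + Σ_{t=1}^{γ} 1{T ≥ t}·(Λ¹_t − Λ⁰_t))`
where `Λᵈ_t = E[Y d t − Y d (t−1) | σ(γ)]`. -/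
theorem stmt6
    {Ω : Type*} [MeasurableSpace Ω] (P : Measure Ω) [IsProbabilityMeasure P]
    (Y : ℕ → ℕ → Ω → ℝ) (hYint : ∀ d t, Integrable (Y d t) P)
    (D : Ω → ℕ) (hD01 : ∀ ω, D ω ≤ 1) (hDmeas : Measurable D)
    (γ T : Ω → ℕ) (hγmeas : Measurable γ) (hTmeas : Measurable T)
    (hTγ : ∀ ω, T ω ≤ γ ω)
    (Yobs : Ω → ℝ) (hYobs : ∀ ω, Yobs ω = Y (D ω) (T ω) ω)
    (hYobsmeas : Measurable Yobs) (hYobsint : Integrable Yobs P)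
    -- (i) randomization
    (hrand : ∀ d ≤ 1, ∀ t : ℕ,
      (P[Y d t | MeasurableSpace.comap (fun ω => (D ω, T ω, γ ω)) inferInstance])
        =ᵐ[P] (P[Y d t | MeasurableSpace.comap γ inferInstance])) :
    (P[Yobs | MeasurableSpace.comap (fun ω => (D ω, T ω, γ ω)) inferInstance])
      =ᵐ[P] fun ω =>
        (P[Y 0 0 | MeasurableSpace.comap γ inferInstance]) ω
        + (∑ t ∈ Finset.Icc 1 (γ ω), (if t ≤ T ω then (1 : ℝ) else 0) *
            (P[fun ω' => Y 0 t ω' - Y 0 (t - 1) ω' |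
                MeasurableSpace.comap γ inferInstance]) ω)
        + (D ω : ℝ) *
          ((P[fun ω' => Y 1 0 ω' - Y 0 0 ω' | MeasurableSpace.comap γ inferInstance]) ω
            + ∑ t ∈ Finset.Icc 1 (γ ω), (if t ≤ T ω then (1 : ℝ) else 0) *
                ((P[fun ω' => Y 1 t ω' - Y 1 (t - 1) ω' |
                    MeasurableSpace.comap γ inferInstance]) ω
                  - (P[fun ω' => Y 0 t ω' - Y 0 (t - 1) ω' |
                      MeasurableSpace.comap γ inferInstance]) ω)) := by
  set mH := MeasurableSpace.comap (fun ω => (D ω, T ω, γ ω)) inferInstance with hmH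
  set mG := MeasurableSpace.comap γ inferInstance with hmG
  -- the sets of the decomposition
  set s : ℕ → ℕ → Set Ω := fun d t => {ω | D ω = d ∧ T ω = t} with hs
  have hsmeas : ∀ d t, MeasurableSet[mH] (s d t) := by
    intro d t
    refine ⟨({d} : Set ℕ) ×ˢ (({t} : Set ℕ) ×ˢ Set.univ), by measurability, ?_⟩
    ext ω
    simp only [s, Set.mem_preimage, Set.mem_prod, Set.mem_singleton_iff, Set.mem_univ,
      and_true, Set.mem_setOf_eq]
  -- key: on s d t, E[Yobs|H] = E[Y d t|G] a.e.
  have hkey : ∀ᵐ ω ∂P, ∀ d t : ℕ, d ≤ 1 → ω ∈ s d t →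
      (P[Yobs|mH]) ω = (P[Y d t|mG]) ω := by
    rw [ae_all_iff]
    intro d
    rw [ae_all_iff]
    intro t
    by_cases hd : d ≤ 1
    · have hind : (s d t).indicator Yobs = (s d t).indicator (Y d t) := by
        apply Set.indicator_congr
        intro ω hω
        rw [hYobs ω, hω.1, hω.2]
      have h1 : (s d t).indicator (P[Yobs|mH]) =ᵐ[P] (s d t).indicator (P[Y d t|mH]) :=
        (condExp_indicator hYobsint (hsmeas d t)).symm.trans
          (by rw [hind]; exact condExp_indicator (hYint d t) (hsmeas d t))
      filter_upwards [h1, hrand d hd t] with ω h1ω h2ω hd' hω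
      have := h1ω
      rw [Set.indicator_of_mem hω, Set.indicator_of_mem hω] at this
      rw [this, ← h2ω]
    · filter_upwards with ω hd'
      exact absurd hd' hd
  -- conditional expectation of differences
  have hsub : ∀ᵐ ω ∂P, ∀ d t : ℕ,
      (P[fun ω' => Y d t ω' - Y d (t - 1) ω'|mG]) ω
        = (P[Y d t|mG]) ω - (P[Y d (t - 1)|mG]) ω := by
    rw [ae_all_iff]
    intro d
    rw [ae_all_iff]
    intro t
    have := condExp_sub (m := mG) (μ := P) (hYint d t) (hYint d (t - 1))
    filter_upwards [this] with ω hω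
    exact hω
  have hsub10 : ∀ᵐ ω ∂P,
      (P[fun ω' => Y 1 0 ω' - Y 0 0 ω'|mG]) ω = (P[Y 1 0|mG]) ω - (P[Y 0 0|mG]) ω := by
    have := condExp_sub (m := mG) (μ := P) (hYint 1 0) (hYint 0 0)
    filter_upwards [this] with ω hω
    exact hω
  filter_upwards [hkey, hsub, hsub10] with ω hkeyω hsubω hsub10ω
  have hmem : ω ∈ s (D ω) (T ω) := ⟨rfl, rfl⟩
  rw [hkeyω (D ω) (T ω) (hD01 ω) hmem]
  have hsum0 : ∑ t ∈ Finset.Icc 1 (γ ω), (if t ≤ T ω then (1 : ℝ) else 0) *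
      (P[fun ω' => Y 0 t ω' - Y 0 (t - 1) ω'|mG]) ω
      = (P[Y 0 (T ω)|mG]) ω - (P[Y 0 0|mG]) ω := by
    rw [Finset.sum_congr rfl (fun t _ => by rw [hsubω 0 t])]
    exact telescope (fun u => (P[Y 0 u|mG]) ω) (hTγ ω)
  have hsum1 : ∑ t ∈ Finset.Icc 1 (γ ω), (if t ≤ T ω then (1 : ℝ) else 0) *
      ((P[fun ω' => Y 1 t ω' - Y 1 (t - 1) ω'|mG]) ω
        - (P[fun ω' => Y 0 t ω' - Y 0 (t - 1) ω'|mG]) ω)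
      = ((P[Y 1 (T ω)|mG]) ω - (P[Y 1 0|mG]) ω)
        - ((P[Y 0 (T ω)|mG]) ω - (P[Y 0 0|mG]) ω) := by
    rw [Finset.sum_congr rfl (fun t _ => by rw [hsubω 1 t, hsubω 0 t])]
    have ht := telescope (fun u => (P[Y 1 u|mG]) ω - (P[Y 0 u|mG]) ω) (hTγ ω)
    refine (Finset.sum_congr rfl fun x _ => ?_).trans (ht.trans (by ring))
    beta_reduce
    ring
  rw [hsum0, hsum1, hsub10ω]
  rcases Nat.le_one_iff_eq_zero_or_eq_one.mp (hD01 ω) with h | h <;> rw [h]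
  · push_cast
    ring
  · push_cast
    ring
end

section
/- Let (Ω,F,P) be a probability space, p ∈ (0,1), D : Ω → ℝ a random variable taking values in {0,1} with P(D = 1) = p, and γ, T : Ω → ℕ random variables with T ≤ γ pointwise. Assume D is independent of the pair (γ, T). Let θ⁰⁰, μᵈᵉ, λˢᵉ : ℕ → ℝ and ε : Ω → ℝ be such that Y := θ⁰⁰(γ) + μᵈᵉ(γ)·D + λˢᵉ(γ)·T + ε, where θ⁰⁰(γ), μᵈᵉ(γ), λˢᵉ(γ)·T, ε, Y are integrable, and E[ε·D] = 0 and E[ε] = 0. Then Cov(Y, D)/Var(D) = E[μᵈᵉ(γ)]; i.e., the population OLS coefficient on own treatment identifies the average direct effect. -/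
open MeasureTheory ProbabilityTheory

/-!
Write `Y = Z + W·D + ε` with `Z = θ⁰⁰(γ) + λˢᵉ(γ)·T` and `W = μᵈᵉ(γ)`. Both `Z` and `W` are
functions of `(γ, T)`, hence independent of `D`, so `Cov(Z, D) = 0` and
`Cov(W·D, D) = E[W]·Var(D)`; the moment conditions on `ε` give `Cov(ε, D) = 0`. Hence
`Cov(Y, D) = E[W]·Var(D)`, and `Var(D) = p(1 - p) ≠ 0`.
-/

section

variable {Ω : Type*} [MeasurableSpace Ω] {P : Measure Ω}

lemma integral_mul_sub_integral_mul_integral_of_indepFun [IsFiniteMeasure P]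
    {D Z W ε Y : Ω → ℝ} {C : ℝ} (hY : ∀ ω, Y ω = Z ω + W ω * D ω + ε ω)
    (hDm : AEStronglyMeasurable D P) (hDC : ∀ᵐ ω ∂P, ‖D ω‖ ≤ C)
    (hZ : Integrable Z P) (hW : Integrable W P) (hε : Integrable ε P)
    (hZD : IndepFun Z D P) (hWD : IndepFun W D P) :
    (∫ ω, Y ω * D ω ∂P) - (∫ ω, Y ω ∂P) * ∫ ω, D ω ∂P
      = (∫ ω, W ω ∂P) * ((∫ ω, D ω * D ω ∂P) - (∫ ω, D ω ∂P) * ∫ ω, D ω ∂P)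
        + ((∫ ω, ε ω * D ω ∂P) - (∫ ω, ε ω ∂P) * ∫ ω, D ω ∂P) := by
  have hDDC : ∀ᵐ ω ∂P, ‖D ω * D ω‖ ≤ C * C := hDC.mono fun ω h => by
    rw [norm_mul]; exact mul_le_mul h h (norm_nonneg _) ((norm_nonneg _).trans h)
  have hWDD : ∫ ω, W ω * (D ω * D ω) ∂P = (∫ ω, W ω ∂P) * ∫ ω, D ω * D ω ∂P :=
    (hWD.comp measurable_id (measurable_id.mul measurable_id)).integral_fun_mul_eq_mul_integral
      hW.1 (hDm.mul hDm)
  have hZDint : Integrable (fun ω => Z ω * D ω) P := hZ.mul_bdd hDm hDC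
  have hWDint : Integrable (fun ω => W ω * D ω) P := hW.mul_bdd hDm hDC
  have hWDDint : Integrable (fun ω => W ω * (D ω * D ω)) P := hW.mul_bdd (hDm.mul hDm) hDDC
  have hεDint : Integrable (fun ω => ε ω * D ω) P := hε.mul_bdd hDm hDC
  have hYD : ∫ ω, (Z ω + W ω * D ω + ε ω) * D ω ∂P
      = (∫ ω, Z ω * D ω ∂P) + (∫ ω, W ω * (D ω * D ω) ∂P) + ∫ ω, ε ω * D ω ∂P := by
    simp only [add_mul, mul_assoc]
    rw [integral_add _ hεDint, integral_add hZDint hWDDint]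
    exact hZDint.add hWDDint
  have hYint : ∫ ω, (Z ω + W ω * D ω + ε ω) ∂P
      = (∫ ω, Z ω ∂P) + (∫ ω, W ω * D ω ∂P) + ∫ ω, ε ω ∂P := by
    rw [integral_add _ hε, integral_add hZ hWDint]
    exact hZ.add hWDint
  simp only [hY]
  rw [hYD, hYint, hWDD, hZD.integral_fun_mul_eq_mul_integral hZ.1 hDm,
    hWD.integral_fun_mul_eq_mul_integral hW.1 hDm]
  ring

lemma integral_eq_measureReal_of_forall_eq_zero_or_one {D : Ω → ℝ} (hDm : Measurable D)
    (hD01 : ∀ ω, D ω = 0 ∨ D ω = 1) :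
    ∫ ω, D ω ∂P = P.real {ω | D ω = 1} := by
  have hD : ∀ ω, D ω = {ω | D ω = 1}.indicator 1 ω := fun ω => by
    rcases hD01 ω with h | h <;> simp [Set.indicator, h]
  rw [integral_congr_ae (ae_of_all P hD)]
  exact integral_indicator_one (hDm (measurableSet_singleton 1))

end

theorem stmt7_general
    {Ω : Type*} [MeasurableSpace Ω] (P : Measure Ω) [IsProbabilityMeasure P]
    (p : ℝ) (hp0 : 0 < p) (hp1 : p < 1)
    (D : Ω → ℝ) (hDmeas : Measurable D) (hD01 : ∀ ω, D ω = 0 ∨ D ω = 1)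
    (hDp : P {ω | D ω = 1} = ENNReal.ofReal p)
    (γ T : Ω → ℕ)
    (hindep : IndepFun D (fun ω => (γ ω, T ω)) P)
    (θ00 μde lamse : ℕ → ℝ) (ε : Ω → ℝ) (Y : Ω → ℝ)
    (hY : ∀ ω, Y ω = θ00 (γ ω) + μde (γ ω) * D ω + lamse (γ ω) * (T ω : ℝ) + ε ω)
    (hθint : Integrable (fun ω => θ00 (γ ω)) P)
    (hμint : Integrable (fun ω => μde (γ ω)) P)
    (hlamTint : Integrable (fun ω => lamse (γ ω) * (T ω : ℝ)) P)
    (hεint : Integrable ε P)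
    (hεD : ∫ ω, ε ω * D ω ∂P = 0) (hε : ∫ ω, ε ω ∂P = 0) :
    ((∫ ω, Y ω * D ω ∂P) - (∫ ω, Y ω ∂P) * (∫ ω, D ω ∂P)) /
        ((∫ ω, D ω * D ω ∂P) - (∫ ω, D ω ∂P) * (∫ ω, D ω ∂P))
      = ∫ ω, μde (γ ω) ∂P := by
  have hDC : ∀ᵐ ω ∂P, ‖D ω‖ ≤ 1 := ae_of_all P fun ω => by
    rcases hD01 ω with h | h <;> simp [h]
  have hindep_comp (f : ℕ × ℕ → ℝ) : IndepFun (fun ω => f (γ ω, T ω)) D P :=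
    (hindep.comp measurable_id (measurable_of_countable f)).symm
  have hED : ∫ ω, D ω ∂P = p := by
    rw [integral_eq_measureReal_of_forall_eq_zero_or_one hDmeas hD01, measureReal_def, hDp,
      ENNReal.toReal_ofReal hp0.le]
  have hEDD : ∫ ω, D ω * D ω ∂P = p := by
    have hDD (ω : Ω) : D ω * D ω = D ω := by rcases hD01 ω with h | h <;> simp [h]
    simp only [hDD, hED]
  have hYsplit (ω : Ω) : Y ω = (θ00 (γ ω) + lamse (γ ω) * T ω) + μde (γ ω) * D ω + ε ω := by
    rw [hY]; ring
  rw [integral_mul_sub_integral_mul_integral_of_indepFun hYsplit hDmeas.aestronglyMeasurable hDC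
    (hθint.add hlamTint) hμint hεint (hindep_comp fun q => θ00 q.1 + lamse q.1 * q.2)
    (hindep_comp fun q => μde q.1), hεD, hε, hED, hEDD]
  have hvar : p - p * p ≠ 0 := by nlinarith
  rw [zero_mul, sub_zero, add_zero, mul_div_cancel_right₀ _ hvar]

/-- In the partially linear representation
`Y = θ⁰⁰(γ) + μᵈᵉ(γ)·D + λˢᵉ(γ)·T + ε` with randomized `D`, the population OLS
coefficient on own treatment, `Cov(Y,D)/Var(D)`, identifies the average direct
effect `E[μᵈᵉ(γ)]`. -/
theorem stmt7
    {Ω : Type*} [MeasurableSpace Ω] (P : Measure Ω) [IsProbabilityMeasure P]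
    (p : ℝ) (hp0 : 0 < p) (hp1 : p < 1)
    (D : Ω → ℝ) (hDmeas : Measurable D) (hD01 : ∀ ω, D ω = 0 ∨ D ω = 1)
    (hDp : P {ω | D ω = 1} = ENNReal.ofReal p)
    (γ T : Ω → ℕ) (hγmeas : Measurable γ) (hTmeas : Measurable T)
    (hTγ : ∀ ω, T ω ≤ γ ω)
    (hindep : IndepFun D (fun ω => (γ ω, T ω)) P)
    (θ00 μde lamse : ℕ → ℝ) (ε : Ω → ℝ) (Y : Ω → ℝ)
    (hY : ∀ ω, Y ω = θ00 (γ ω) + μde (γ ω) * D ω + lamse (γ ω) * (T ω : ℝ) + ε ω)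
    (hθint : Integrable (fun ω => θ00 (γ ω)) P)
    (hμint : Integrable (fun ω => μde (γ ω)) P)
    (hlamTint : Integrable (fun ω => lamse (γ ω) * (T ω : ℝ)) P)
    (hεint : Integrable ε P) (hYint : Integrable Y P)
    (hεD : ∫ ω, ε ω * D ω ∂P = 0) (hε : ∫ ω, ε ω ∂P = 0) :
    ((∫ ω, Y ω * D ω ∂P) - (∫ ω, Y ω ∂P) * (∫ ω, D ω ∂P)) /
        ((∫ ω, D ω * D ω ∂P) - (∫ ω, D ω ∂P) * (∫ ω, D ω ∂P))
      = ∫ ω, μde (γ ω) ∂P :=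
  stmt7_general P p hp0 hp1 D hDmeas hD01 hDp γ T hindep θ00 μde lamse ε Y hY hθint hμint hlamTint
    hεint hεD hε
end

section
/- Let (Ω,F,P) be a probability space, p ∈ (0,1), D : Ω → ℝ taking values in {0,1} with P(D = 1) = p, and γ, T : Ω → ℕ with 1 ≤ γ almost surely and T ≤ γ pointwise. Define D̄ := T/γ. Assume D is independent of (γ, T), E[D̄ | σ(γ)] = p almost surely, and E[(D̄ − p)² | σ(γ)] = p(1−p)/γ almost surely, with 1/γ integrable. Let θ⁰⁰, μᵈᵉ, λˢᵉ : ℕ → ℝ and ε : Ω → ℝ be such that Y := θ⁰⁰(γ) + μᵈᵉ(γ)·D + λˢᵉ(γ)·T + ε with all terms integrable, E[ε] = 0, E[ε·D̄] = 0, and λˢᵉ(γ) integrable. Then Cov(Y, D̄)/Var(D̄) = E[λˢᵉ(γ)] / E[1/γ] = E[ w(γ) · γ·λˢᵉ(γ) ], where w(γ) := (1/γ)/E[1/γ]; i.e., when isolated nodes are excluded, the D̄-regression spillover coefficient identifies a weighted average of γ·λˢᵉ(γ) with weights inversely proportional to degree. -/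
open MeasureTheory ProbabilityTheory

/-! Write `W := D̄ - p`. Since `E[D̄] = p`, both `Cov(Y, D̄)` and `Var(D̄)` are of the form
`E[X · W]`. Conditionally on `γ`, `W` has mean `0` and variance `p(1-p)/γ`, so
`E[f(γ) W] = 0` and `E[f(γ) W²] = p(1-p) E[f(γ)/γ]`. In `Y · W` the `θ(γ)` term then vanishes,
the `μ(γ) D` term factors by independence as `E[D] · E[μ(γ) W] = 0`, the `ε` term vanishes by
assumption, and `λ(γ) T = γλ(γ) D̄` gives `λ(γ) T W = γλ(γ) (W² + p W)`, of expectation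
`p(1-p) E[λ(γ)]`. Likewise `Var(D̄) = E[W²] = p(1-p) E[1/γ]`, and the factor `p(1-p)` cancels. -/

section ConditionalExpectation

variable {Ω : Type*} {m m₀ : MeasurableSpace Ω} {μ : Measure Ω} {f g h : Ω → ℝ}

theorem condExp_mul_ae_eq_of_condExp_ae_eq (hf : StronglyMeasurable[m] f)
    (hfg : Integrable (f * g) μ) (hg : Integrable g μ) (hgh : μ[g|m] =ᵐ[μ] h) :
    μ[f * g|m] =ᵐ[μ] f * h := by
  filter_upwards [condExp_mul_of_stronglyMeasurable_left hf hfg hg, hgh] with ω hfg hgh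
  rw [hfg, Pi.mul_apply, hgh, Pi.mul_apply]

theorem integral_mul_eq_of_condExp_ae_eq (hm : m ≤ m₀) [SigmaFinite (μ.trim hm)]
    (hf : StronglyMeasurable[m] f) (hfg : Integrable (f * g) μ) (hg : Integrable g μ)
    (hgh : μ[g|m] =ᵐ[μ] h) :
    ∫ ω, f ω * g ω ∂μ = ∫ ω, f ω * h ω ∂μ :=
  (integral_condExp hm).symm.trans
    (integral_congr_ae (condExp_mul_ae_eq_of_condExp_ae_eq hf hfg hg hgh))

theorem integrable_mul_of_condExp_ae_eq (hf : StronglyMeasurable[m] f)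
    (hfg : Integrable (f * g) μ) (hg : Integrable g μ) (hgh : μ[g|m] =ᵐ[μ] h) :
    Integrable (f * h) μ :=
  integrable_condExp.congr (condExp_mul_ae_eq_of_condExp_ae_eq hf hfg hg hgh)

theorem integral_eq_of_condExp_ae_eq_const (hm : m ≤ m₀) [IsFiniteMeasure μ] {c : ℝ}
    (h : μ[f|m] =ᵐ[μ] fun _ => c) : ∫ ω, f ω ∂μ = μ.real Set.univ * c := by
  rw [← integral_condExp hm, integral_congr_ae h, integral_const, smul_eq_mul]

theorem integral_mul_sub_const {X Z : Ω → ℝ} (hX : Integrable X μ)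
    (hXZ : Integrable (fun ω => X ω * Z ω) μ) (c : ℝ) :
    ∫ ω, X ω * (Z ω - c) ∂μ = ∫ ω, X ω * Z ω ∂μ - (∫ ω, X ω ∂μ) * c := by
  simp_rw [mul_sub]
  rw [integral_sub hXZ (hX.mul_const c), integral_mul_const]

end ConditionalExpectation

theorem stronglyMeasurable_comap_comp {Ω : Type*} (γ : Ω → ℕ) (φ : ℕ → ℝ) :
    StronglyMeasurable[MeasurableSpace.comap γ inferInstance] (fun ω => φ (γ ω)) :=
  (measurable_from_nat.comp (comap_measurable γ)).stronglyMeasurable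

theorem natCast_div_natCast_mem_Icc {a b : ℕ} (h : a ≤ b) : (a : ℝ) / b ∈ Set.Icc 0 1 :=
  ⟨by positivity, div_le_one_of_le₀ (by exact_mod_cast h) (by positivity)⟩

theorem integral_div_eq_integral_inv_div_mul {Ω : Type*} [MeasurableSpace Ω] {P : Measure Ω}
    {γ : Ω → ℕ} (hγ1 : ∀ᵐ ω ∂P, 1 ≤ γ ω) (φ : ℕ → ℝ) (c : ℝ) :
    (∫ ω, φ (γ ω) ∂P) / c = ∫ ω, ((γ ω : ℝ)⁻¹ / c) * ((γ ω : ℝ) * φ (γ ω)) ∂P := by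
  rw [← integral_div]
  refine integral_congr_ae (hγ1.mono fun ω hω => ?_)
  have : (γ ω : ℝ) ≠ 0 := by positivity
  field_simp

section FractionTreated

variable {Ω : Type*} [MeasurableSpace Ω] {P : Measure Ω} {p : ℝ} {γ T : Ω → ℕ} {Dbar : Ω → ℝ}

theorem integrable_mul_sub_of_norm_le (hDbar : Measurable Dbar) (hbound : ∀ ω, ‖Dbar ω - p‖ ≤ 1)
    {f : Ω → ℝ} (hf : Integrable f P) : Integrable (fun ω => f ω * (Dbar ω - p)) P :=
  hf.mul_bdd (hDbar.sub_const p).aestronglyMeasurable (.of_forall hbound)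

theorem integrable_mul_sub_sq_of_norm_le (hDbar : Measurable Dbar)
    (hbound : ∀ ω, ‖Dbar ω - p‖ ≤ 1) {f : Ω → ℝ} (hf : Integrable f P) :
    Integrable (fun ω => f ω * (Dbar ω - p) ^ 2) P :=
  hf.mul_bdd ((hDbar.sub_const p).pow_const 2).aestronglyMeasurable
    (.of_forall fun ω => by rw [norm_pow]; exact pow_le_one₀ (norm_nonneg _) (hbound ω))

theorem integrable_mul_of_norm_sub_le (hDbar : Measurable Dbar) (hbound : ∀ ω, ‖Dbar ω - p‖ ≤ 1)
    {f : Ω → ℝ} (hf : Integrable f P) : Integrable (fun ω => f ω * Dbar ω) P :=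
  ((integrable_mul_sub_of_norm_le hDbar hbound hf).add (hf.mul_const p)).congr
    (.of_forall fun ω => by simp only [Pi.add_apply]; ring)

variable [IsProbabilityMeasure P]

theorem integrable_of_norm_sub_le (hDbar : Measurable Dbar) (hbound : ∀ ω, ‖Dbar ω - p‖ ≤ 1) :
    Integrable Dbar P := by
  simpa using integrable_mul_of_norm_sub_le hDbar hbound (integrable_const (μ := P) 1)

theorem integral_mul_sub_integral_mul_integral_eq (hγ : Measurable γ) (hDbar : Measurable Dbar)
    (hbound : ∀ ω, ‖Dbar ω - p‖ ≤ 1)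
    (hcondmean : P[Dbar | MeasurableSpace.comap γ inferInstance] =ᵐ[P] fun _ => p)
    {X : Ω → ℝ} (hX : Integrable X P) :
    (∫ ω, X ω * Dbar ω ∂P) - (∫ ω, X ω ∂P) * (∫ ω, Dbar ω ∂P) = ∫ ω, X ω * (Dbar ω - p) ∂P := by
  rw [integral_mul_sub_const hX (integrable_mul_of_norm_sub_le hDbar hbound hX),
    integral_eq_of_condExp_ae_eq_const hγ.comap_le hcondmean, probReal_univ, one_mul]

theorem integral_comp_mul_sub_eq_zero (hγ : Measurable γ) (hDbar : Measurable Dbar)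
    (hbound : ∀ ω, ‖Dbar ω - p‖ ≤ 1)
    (hcondmean : P[Dbar | MeasurableSpace.comap γ inferInstance] =ᵐ[P] fun _ => p)
    {φ : ℕ → ℝ} (hφ : Integrable (fun ω => φ (γ ω)) P) :
    ∫ ω, φ (γ ω) * (Dbar ω - p) ∂P = 0 := by
  have hcond : P[fun ω => Dbar ω - p | MeasurableSpace.comap γ inferInstance] =ᵐ[P] 0 := by
    filter_upwards [condExp_sub (integrable_of_norm_sub_le hDbar hbound) (integrable_const p)
      (MeasurableSpace.comap γ inferInstance), hcondmean] with ω hsub hmean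
    exact hsub.trans (by simp [hmean, condExp_const hγ.comap_le])
  rw [integral_mul_eq_of_condExp_ae_eq hγ.comap_le (stronglyMeasurable_comap_comp γ φ)
    (integrable_mul_sub_of_norm_le hDbar hbound hφ)
    (by simpa using integrable_mul_sub_of_norm_le hDbar hbound (integrable_const 1)) hcond]
  simp

theorem integral_comp_mul_sub_sq_eq (hγ : Measurable γ) (hDbar : Measurable Dbar)
    (hbound : ∀ ω, ‖Dbar ω - p‖ ≤ 1)
    (hcondvar : P[fun ω => (Dbar ω - p) ^ 2 | MeasurableSpace.comap γ inferInstance]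
      =ᵐ[P] fun ω => p * (1 - p) / (γ ω : ℝ))
    {φ : ℕ → ℝ} (hφ : Integrable (fun ω => φ (γ ω)) P) :
    ∫ ω, φ (γ ω) * (Dbar ω - p) ^ 2 ∂P = p * (1 - p) * ∫ ω, φ (γ ω) / γ ω ∂P := by
  rw [integral_mul_eq_of_condExp_ae_eq hγ.comap_le (stronglyMeasurable_comap_comp γ φ)
    (integrable_mul_sub_sq_of_norm_le hDbar hbound hφ)
    (by simpa using integrable_mul_sub_sq_of_norm_le hDbar hbound (integrable_const 1)) hcondvar,
    ← integral_const_mul]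
  congr 1 with ω
  ring

theorem integral_comp_mul_mul_sub_eq_zero {D : Ω → ℝ} (hD : AEStronglyMeasurable D P)
    (hindep : IndepFun D (fun ω => (γ ω, T ω)) P) (hγ : Measurable γ)
    (hDbar_eq : ∀ ω, Dbar ω = (T ω : ℝ) / (γ ω : ℝ)) (hDbar : Measurable Dbar)
    (hbound : ∀ ω, ‖Dbar ω - p‖ ≤ 1)
    (hcondmean : P[Dbar | MeasurableSpace.comap γ inferInstance] =ᵐ[P] fun _ => p)
    {φ : ℕ → ℝ} (hφ : Integrable (fun ω => φ (γ ω)) P) :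
    ∫ ω, φ (γ ω) * D ω * (Dbar ω - p) ∂P = 0 := by
  have hindep' : IndepFun D (fun ω => φ (γ ω) * (Dbar ω - p)) P := by
    simp_rw [hDbar_eq]
    exact hindep.comp measurable_id
      (measurable_of_countable fun q : ℕ × ℕ => φ q.1 * ((q.2 : ℝ) / q.1 - p))
  calc ∫ ω, φ (γ ω) * D ω * (Dbar ω - p) ∂P
      = ∫ ω, D ω * (φ (γ ω) * (Dbar ω - p)) ∂P := by congr 1 with ω; ring
    _ = (∫ ω, D ω ∂P) * ∫ ω, φ (γ ω) * (Dbar ω - p) ∂P :=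
      hindep'.integral_mul_eq_mul_integral hD
        (integrable_mul_sub_of_norm_le hDbar hbound hφ).1
    _ = 0 := by rw [integral_comp_mul_sub_eq_zero hγ hDbar hbound hcondmean hφ, mul_zero]

theorem integral_comp_mul_natCast_mul_sub_eq (hp : p ≠ 0) (hγ : Measurable γ)
    (hγ1 : ∀ᵐ ω ∂P, 1 ≤ γ ω) (hDbar_eq : ∀ ω, Dbar ω = (T ω : ℝ) / (γ ω : ℝ))
    (hDbar : Measurable Dbar) (hbound : ∀ ω, ‖Dbar ω - p‖ ≤ 1)
    (hcondmean : P[Dbar | MeasurableSpace.comap γ inferInstance] =ᵐ[P] fun _ => p)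
    (hcondvar : P[fun ω => (Dbar ω - p) ^ 2 | MeasurableSpace.comap γ inferInstance]
      =ᵐ[P] fun ω => p * (1 - p) / (γ ω : ℝ))
    {φ : ℕ → ℝ} (hφT : Integrable (fun ω => φ (γ ω) * (T ω : ℝ)) P) :
    ∫ ω, φ (γ ω) * (T ω : ℝ) * (Dbar ω - p) ∂P = p * (1 - p) * ∫ ω, φ (γ ω) ∂P := by
  set ψ : ℕ → ℝ := fun n => n * φ n
  have hT : ∀ᵐ ω ∂P, φ (γ ω) * (T ω : ℝ) = ψ (γ ω) * Dbar ω := hγ1.mono fun ω hω => by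
    have : (γ ω : ℝ) ≠ 0 := by positivity
    rw [hDbar_eq]
    simp only [ψ]
    field_simp
  -- `p · γλ(γ)` is the conditional expectation of `λ(γ) T`, hence integrable.
  have hψ : Integrable (fun ω => ψ (γ ω)) P :=
    (integrable_mul_const_iff (isUnit_iff_ne_zero.2 hp) _).1 <|
      integrable_mul_of_condExp_ae_eq (stronglyMeasurable_comap_comp γ ψ) (hφT.congr hT)
        (integrable_of_norm_sub_le hDbar hbound) hcondmean
  calc ∫ ω, φ (γ ω) * (T ω : ℝ) * (Dbar ω - p) ∂P
      = ∫ ω, ψ (γ ω) * (Dbar ω - p) ^ 2 + p * (ψ (γ ω) * (Dbar ω - p)) ∂P :=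
        integral_congr_ae (hT.mono fun ω hω => by beta_reduce; rw [hω]; ring)
    _ = p * (1 - p) * (∫ ω, ψ (γ ω) / γ ω ∂P) + p * 0 := by
      rw [integral_add (integrable_mul_sub_sq_of_norm_le hDbar hbound hψ)
        ((integrable_mul_sub_of_norm_le hDbar hbound hψ).const_mul p), integral_const_mul,
        integral_comp_mul_sub_sq_eq hγ hDbar hbound hcondvar hψ,
        integral_comp_mul_sub_eq_zero hγ hDbar hbound hcondmean hψ]
    _ = p * (1 - p) * ∫ ω, φ (γ ω) ∂P := by
      rw [mul_zero, add_zero]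
      congr 1
      refine integral_congr_ae (hγ1.mono fun ω hω => ?_)
      have : (γ ω : ℝ) ≠ 0 := by positivity
      simp only [ψ]
      field_simp

theorem integral_mul_sub_eq_integral_inv (hγ : Measurable γ) (hDbar : Measurable Dbar)
    (hbound : ∀ ω, ‖Dbar ω - p‖ ≤ 1)
    (hcondmean : P[Dbar | MeasurableSpace.comap γ inferInstance] =ᵐ[P] fun _ => p)
    (hcondvar : P[fun ω => (Dbar ω - p) ^ 2 | MeasurableSpace.comap γ inferInstance]
      =ᵐ[P] fun ω => p * (1 - p) / (γ ω : ℝ)) :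
    ∫ ω, Dbar ω * (Dbar ω - p) ∂P = p * (1 - p) * ∫ ω, ((γ ω : ℝ))⁻¹ ∂P := by
  have h1 : Integrable (fun _ : Ω => (1 : ℝ)) P := integrable_const 1
  calc ∫ ω, Dbar ω * (Dbar ω - p) ∂P
      = ∫ ω, 1 * (Dbar ω - p) ^ 2 + p * (1 * (Dbar ω - p)) ∂P := by congr 1 with ω; ring
    _ = p * (1 - p) * (∫ ω, 1 / (γ ω : ℝ) ∂P) + p * 0 := by
      rw [integral_add (integrable_mul_sub_sq_of_norm_le hDbar hbound h1)
        ((integrable_mul_sub_of_norm_le hDbar hbound h1).const_mul p), integral_const_mul p,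
        integral_comp_mul_sub_sq_eq (φ := fun _ => 1) hγ hDbar hbound hcondvar h1,
        integral_comp_mul_sub_eq_zero (φ := fun _ => 1) hγ hDbar hbound hcondmean h1]
    _ = p * (1 - p) * ∫ ω, ((γ ω : ℝ))⁻¹ ∂P := by simp

theorem integral_outcome_mul_sub_eq {D ε Y : Ω → ℝ} {θ μ lam : ℕ → ℝ} (hp : p ≠ 0)
    (hD : Measurable D) (hD01 : ∀ ω, D ω = 0 ∨ D ω = 1)
    (hindep : IndepFun D (fun ω => (γ ω, T ω)) P) (hγ : Measurable γ) (hγ1 : ∀ᵐ ω ∂P, 1 ≤ γ ω)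
    (hDbar_eq : ∀ ω, Dbar ω = (T ω : ℝ) / (γ ω : ℝ)) (hDbar : Measurable Dbar)
    (hbound : ∀ ω, ‖Dbar ω - p‖ ≤ 1)
    (hcondmean : P[Dbar | MeasurableSpace.comap γ inferInstance] =ᵐ[P] fun _ => p)
    (hcondvar : P[fun ω => (Dbar ω - p) ^ 2 | MeasurableSpace.comap γ inferInstance]
      =ᵐ[P] fun ω => p * (1 - p) / (γ ω : ℝ))
    (hY : ∀ ω, Y ω = θ (γ ω) + μ (γ ω) * D ω + lam (γ ω) * (T ω : ℝ) + ε ω)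
    (hθ : Integrable (fun ω => θ (γ ω)) P) (hμ : Integrable (fun ω => μ (γ ω)) P)
    (hlamT : Integrable (fun ω => lam (γ ω) * (T ω : ℝ)) P) (hε : Integrable ε P)
    (hε0 : ∫ ω, ε ω ∂P = 0) (hεDbar : ∫ ω, ε ω * Dbar ω ∂P = 0) :
    ∫ ω, Y ω * (Dbar ω - p) ∂P = p * (1 - p) * ∫ ω, lam (γ ω) ∂P := by
  have hμD : Integrable (fun ω => μ (γ ω) * D ω) P :=
    hμ.mul_bdd (c := 1) hD.aestronglyMeasurable
      (.of_forall fun ω => by rcases hD01 ω with h | h <;> simp [h])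
  have hθW := integrable_mul_sub_of_norm_le hDbar hbound hθ
  have hμDW := integrable_mul_sub_of_norm_le hDbar hbound hμD
  have hlamTW := integrable_mul_sub_of_norm_le hDbar hbound hlamT
  have hεW := integrable_mul_sub_of_norm_le hDbar hbound hε
  calc ∫ ω, Y ω * (Dbar ω - p) ∂P
      = ∫ ω, θ (γ ω) * (Dbar ω - p) + μ (γ ω) * D ω * (Dbar ω - p)
          + lam (γ ω) * (T ω : ℝ) * (Dbar ω - p) + ε ω * (Dbar ω - p) ∂P := by
        congr 1 with ω; rw [hY]; ring
    _ = 0 + 0 + p * (1 - p) * (∫ ω, lam (γ ω) ∂P) + (0 - 0 * p) := by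
      rw [integral_add ?_ hεW, integral_add ?_ hlamTW, integral_add hθW hμDW,
        integral_comp_mul_sub_eq_zero hγ hDbar hbound hcondmean hθ,
        integral_comp_mul_mul_sub_eq_zero hD.aestronglyMeasurable hindep hγ hDbar_eq hDbar hbound
          hcondmean hμ,
        integral_comp_mul_natCast_mul_sub_eq hp hγ hγ1 hDbar_eq hDbar hbound hcondmean hcondvar
          hlamT,
        integral_mul_sub_const hε (integrable_mul_of_norm_sub_le hDbar hbound hε), hε0, hεDbar]
      exacts [hθW.add hμDW, (hθW.add hμDW).add hlamTW]
    _ = p * (1 - p) * ∫ ω, lam (γ ω) ∂P := by ring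

end FractionTreated

theorem stmt10_general
    {Ω : Type*} [MeasurableSpace Ω] (P : Measure Ω) [IsProbabilityMeasure P]
    (p : ℝ) (hp0 : 0 < p) (hp1 : p < 1)
    (D : Ω → ℝ) (hDmeas : Measurable D) (hD01 : ∀ ω, D ω = 0 ∨ D ω = 1)
    (γ T : Ω → ℕ) (hγmeas : Measurable γ) (hTmeas : Measurable T)
    (hγ1 : ∀ᵐ ω ∂P, 1 ≤ γ ω) (hTγ : ∀ ω, T ω ≤ γ ω)
    (Dbar : Ω → ℝ) (hDbar : ∀ ω, Dbar ω = (T ω : ℝ) / (γ ω : ℝ))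
    (hindep : IndepFun D (fun ω => (γ ω, T ω)) P)
    (hcondmean : P[Dbar | MeasurableSpace.comap γ inferInstance]
      =ᵐ[P] fun _ => p)
    (hcondvar : P[fun ω => (Dbar ω - p) ^ 2 | MeasurableSpace.comap γ inferInstance]
      =ᵐ[P] fun ω => p * (1 - p) / (γ ω : ℝ))
    (θ00 μde lamse : ℕ → ℝ) (ε : Ω → ℝ) (Y : Ω → ℝ)
    (hY : ∀ ω, Y ω = θ00 (γ ω) + μde (γ ω) * D ω + lamse (γ ω) * (T ω : ℝ) + ε ω)
    (hθint : Integrable (fun ω => θ00 (γ ω)) P)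
    (hμint : Integrable (fun ω => μde (γ ω)) P)
    (hlamTint : Integrable (fun ω => lamse (γ ω) * (T ω : ℝ)) P)
    (hεint : Integrable ε P) (hYint : Integrable Y P)
    (hε : ∫ ω, ε ω ∂P = 0)
    (hεDbar : ∫ ω, ε ω * Dbar ω ∂P = 0) :
    ((∫ ω, Y ω * Dbar ω ∂P) - (∫ ω, Y ω ∂P) * (∫ ω, Dbar ω ∂P)) /
        ((∫ ω, Dbar ω * Dbar ω ∂P) - (∫ ω, Dbar ω ∂P) * (∫ ω, Dbar ω ∂P))
      = (∫ ω, lamse (γ ω) ∂P) / (∫ ω, ((γ ω : ℝ))⁻¹ ∂P)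
    ∧ ((∫ ω, Y ω * Dbar ω ∂P) - (∫ ω, Y ω ∂P) * (∫ ω, Dbar ω ∂P)) /
        ((∫ ω, Dbar ω * Dbar ω ∂P) - (∫ ω, Dbar ω ∂P) * (∫ ω, Dbar ω ∂P))
      = ∫ ω, (((γ ω : ℝ))⁻¹ / (∫ ω', ((γ ω' : ℝ))⁻¹ ∂P)) *
          ((γ ω : ℝ) * lamse (γ ω)) ∂P := by
  have hDbar_meas : Measurable Dbar := by
    rw [funext hDbar]
    exact (measurable_from_nat.comp hTmeas).div (measurable_from_nat.comp hγmeas)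
  have hbound : ∀ ω, ‖Dbar ω - p‖ ≤ 1 := fun ω => by
    obtain ⟨h0, h1⟩ := hDbar ω ▸ natCast_div_natCast_mem_Icc (hTγ ω)
    rw [Real.norm_eq_abs, abs_le]
    constructor <;> linarith
  have hratio : ((∫ ω, Y ω * Dbar ω ∂P) - (∫ ω, Y ω ∂P) * (∫ ω, Dbar ω ∂P)) /
        ((∫ ω, Dbar ω * Dbar ω ∂P) - (∫ ω, Dbar ω ∂P) * (∫ ω, Dbar ω ∂P))
      = (∫ ω, lamse (γ ω) ∂P) / (∫ ω, ((γ ω : ℝ))⁻¹ ∂P) := by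
    rw [integral_mul_sub_integral_mul_integral_eq hγmeas hDbar_meas hbound hcondmean hYint,
      integral_mul_sub_integral_mul_integral_eq hγmeas hDbar_meas hbound hcondmean
        (integrable_of_norm_sub_le hDbar_meas hbound),
      integral_outcome_mul_sub_eq hp0.ne' hDmeas hD01 hindep hγmeas hγ1 hDbar hDbar_meas hbound
        hcondmean hcondvar hY hθint hμint hlamTint hεint hε hεDbar,
      integral_mul_sub_eq_integral_inv hγmeas hDbar_meas hbound hcondmean hcondvar,
      mul_div_mul_left _ _ (mul_ne_zero hp0.ne' (sub_ne_zero.2 hp1.ne'))]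
  exact ⟨hratio, hratio.trans (integral_div_eq_integral_inv_div_mul hγ1 lamse _)⟩

/-- Theorem 3: When isolated nodes are excluded (`γ ≥ 1` a.s.), the
`D̄`-regression spillover coefficient `Cov(Y, D̄)/Var(D̄)` identifies
`E[λˢᵉ(γ)]/E[1/γ] = E[w(γ)·γ·λˢᵉ(γ)]` with weights `w(γ) = (1/γ)/E[1/γ]`
inversely proportional to degree. -/
theorem stmt10
    {Ω : Type*} [MeasurableSpace Ω] (P : Measure Ω) [IsProbabilityMeasure P]
    (p : ℝ) (hp0 : 0 < p) (hp1 : p < 1)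
    (D : Ω → ℝ) (hDmeas : Measurable D) (hD01 : ∀ ω, D ω = 0 ∨ D ω = 1)
    (hDp : P {ω | D ω = 1} = ENNReal.ofReal p)
    (γ T : Ω → ℕ) (hγmeas : Measurable γ) (hTmeas : Measurable T)
    (hγ1 : ∀ᵐ ω ∂P, 1 ≤ γ ω) (hTγ : ∀ ω, T ω ≤ γ ω)
    (Dbar : Ω → ℝ) (hDbar : ∀ ω, Dbar ω = (T ω : ℝ) / (γ ω : ℝ))
    (hindep : IndepFun D (fun ω => (γ ω, T ω)) P)
    (hcondmean : P[Dbar | MeasurableSpace.comap γ inferInstance]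
      =ᵐ[P] fun _ => p)
    (hcondvar : P[fun ω => (Dbar ω - p) ^ 2 | MeasurableSpace.comap γ inferInstance]
      =ᵐ[P] fun ω => p * (1 - p) / (γ ω : ℝ))
    (hinvγint : Integrable (fun ω => ((γ ω : ℝ))⁻¹) P)
    (θ00 μde lamse : ℕ → ℝ) (ε : Ω → ℝ) (Y : Ω → ℝ)
    (hY : ∀ ω, Y ω = θ00 (γ ω) + μde (γ ω) * D ω + lamse (γ ω) * (T ω : ℝ) + ε ω)
    (hθint : Integrable (fun ω => θ00 (γ ω)) P)
    (hμint : Integrable (fun ω => μde (γ ω)) P)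
    (hlamTint : Integrable (fun ω => lamse (γ ω) * (T ω : ℝ)) P)
    (hεint : Integrable ε P) (hYint : Integrable Y P)
    (hε : ∫ ω, ε ω ∂P = 0)
    (hεDbar : ∫ ω, ε ω * Dbar ω ∂P = 0)
    (hlamint : Integrable (fun ω => lamse (γ ω)) P) :
    ((∫ ω, Y ω * Dbar ω ∂P) - (∫ ω, Y ω ∂P) * (∫ ω, Dbar ω ∂P)) /
        ((∫ ω, Dbar ω * Dbar ω ∂P) - (∫ ω, Dbar ω ∂P) * (∫ ω, Dbar ω ∂P))
      = (∫ ω, lamse (γ ω) ∂P) / (∫ ω, ((γ ω : ℝ))⁻¹ ∂P)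
    ∧ ((∫ ω, Y ω * Dbar ω ∂P) - (∫ ω, Y ω ∂P) * (∫ ω, Dbar ω ∂P)) /
        ((∫ ω, Dbar ω * Dbar ω ∂P) - (∫ ω, Dbar ω ∂P) * (∫ ω, Dbar ω ∂P))
      = ∫ ω, (((γ ω : ℝ))⁻¹ / (∫ ω', ((γ ω' : ℝ))⁻¹ ∂P)) *
          ((γ ω : ℝ) * lamse (γ ω)) ∂P :=
  stmt10_general P p hp0 hp1 D hDmeas hD01 γ T hγmeas hTmeas hγ1 hTγ Dbar hDbar hindep hcondmean
    hcondvar θ00 μde lamse ε Y hY hθint hμint hlamTint hεint hYint hε hεDbar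
end

section
/- Let (Ω,F,P) be a probability space, p ∈ (0,1), γ, T : Ω → ℕ with T ≤ γ pointwise, and define D̄*(ω) = T(ω)/γ(ω) if γ(ω) > 0 and D̄*(ω) = 0 otherwise. Assume E[D̄* | σ(γ)] = p·1{γ > 0} almost surely, and let p_γ := P(γ > 0) with 0 < p_γ < 1. Then for any θ⁰⁰ : ℕ → ℝ with θ⁰⁰(γ) and θ⁰⁰(γ)·D̄* integrable, Cov(θ⁰⁰(γ), D̄*) = ( E[θ⁰⁰(γ) | γ > 0] − E[θ⁰⁰(γ) | γ = 0] ) · p · (1 − p_γ) · p_γ. -/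
/-!
Conditioning on `σ(γ)` turns both moments into integrals over `{γ > 0}`: by the pull-out
property `E[θ(γ) D̄*] = E[θ(γ) E[D̄* | γ]] = p ∫_{γ>0} θ(γ)` and `E[D̄*] = p P(γ > 0)`.
Splitting `E[θ(γ)]` into the conditional means on `{γ > 0}` and its complement `{γ = 0}`,
the covariance becomes `p q (1 - q) (E[θ(γ) | γ > 0] - E[θ(γ) | γ = 0])` with `q = P(γ > 0)`.
-/

open MeasureTheory ProbabilityTheory

section

variable {Ω : Type*} {m m₀ : MeasurableSpace Ω} {μ : Measure Ω}

theorem integral_mul_condExp_of_stronglyMeasurable_left (hm : m ≤ m₀)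
    [SigmaFinite (μ.trim hm)] {f g : Ω → ℝ} (hf : StronglyMeasurable[m] f)
    (hfg : Integrable (f * g) μ) (hg : Integrable g μ) :
    ∫ ω, f ω * (μ[g | m]) ω ∂μ = ∫ ω, f ω * g ω ∂μ :=
  calc ∫ ω, f ω * (μ[g | m]) ω ∂μ = ∫ ω, (μ[f * g | m]) ω ∂μ :=
        integral_congr_ae (condExp_mul_of_stronglyMeasurable_left hf hfg hg).symm
    _ = ∫ ω, f ω * g ω ∂μ := integral_condExp hm

theorem integral_mul_of_condExp_eq_indicator (hm : m ≤ m₀) [SigmaFinite (μ.trim hm)]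
    {f g : Ω → ℝ} {s : Set Ω} {p : ℝ} (hs : MeasurableSet s) (hf : StronglyMeasurable[m] f)
    (hfg : Integrable (f * g) μ) (hg : Integrable g μ)
    (hcond : μ[g | m] =ᵐ[μ] s.indicator fun _ => p) :
    ∫ ω, f ω * g ω ∂μ = p * ∫ ω in s, f ω ∂μ := by
  have hfp : (fun ω => f ω * (μ[g | m]) ω) =ᵐ[μ] s.indicator fun ω => f ω * p := by
    filter_upwards [hcond] with ω hω
    by_cases hωs : ω ∈ s <;> simp [hω, hωs]
  rw [← integral_mul_condExp_of_stronglyMeasurable_left hm hf hfg hg, integral_congr_ae hfp,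
    integral_indicator hs, integral_mul_const, mul_comm]

theorem integral_of_condExp_eq_indicator (hm : m ≤ m₀) [SigmaFinite (μ.trim hm)]
    {g : Ω → ℝ} {s : Set Ω} {p : ℝ} (hs : MeasurableSet s)
    (hcond : μ[g | m] =ᵐ[μ] s.indicator fun _ => p) :
    ∫ ω, g ω ∂μ = p * μ.real s := by
  rw [← integral_condExp hm, integral_congr_ae hcond, integral_indicator_const _ hs, smul_eq_mul,
    mul_comm]

theorem integral_eq_setAverage_add_setAverage_compl [IsProbabilityMeasure μ] {f : Ω → ℝ}
    {s : Set Ω} (hs : MeasurableSet s) (hf : Integrable f μ) :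
    ∫ ω, f ω ∂μ = μ.real s * ⨍ ω in s, f ω ∂μ + (1 - μ.real s) * ⨍ ω in sᶜ, f ω ∂μ := by
  rw [← probReal_compl_eq_one_sub hs, ← smul_eq_mul, ← smul_eq_mul,
    measure_smul_setAverage _ (measure_ne_top μ s),
    measure_smul_setAverage _ (measure_ne_top μ sᶜ), integral_add_compl hs hf]

theorem integral_mul_sub_integral_mul_integral_of_condExp_eq_indicator (hm : m ≤ m₀)
    [IsProbabilityMeasure μ] {f g : Ω → ℝ} {s : Set Ω} {p : ℝ} (hs : MeasurableSet s)
    (hf : StronglyMeasurable[m] f) (hfi : Integrable f μ) (hfg : Integrable (f * g) μ)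
    (hg : Integrable g μ) (hcond : μ[g | m] =ᵐ[μ] s.indicator fun _ => p) :
    ∫ ω, f ω * g ω ∂μ - (∫ ω, f ω ∂μ) * ∫ ω, g ω ∂μ
      = (⨍ ω in s, f ω ∂μ - ⨍ ω in sᶜ, f ω ∂μ) * p * (1 - μ.real s) * μ.real s := by
  rw [integral_mul_of_condExp_eq_indicator hm hs hf hfg hg hcond,
    integral_of_condExp_eq_indicator hm hs hcond, integral_eq_setAverage_add_setAverage_compl hs hfi,
    ← measure_smul_setAverage f (measure_ne_top μ s), smul_eq_mul]
  ring

end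

theorem stmt11_general
    {Ω : Type*} [MeasurableSpace Ω] (P : Measure Ω) [IsProbabilityMeasure P]
    (p : ℝ)
    (γ T : Ω → ℕ) (hγmeas : Measurable γ) (hTmeas : Measurable T)
    (hTγ : ∀ ω, T ω ≤ γ ω)
    (Dstar : Ω → ℝ)
    (hDstar : ∀ ω, Dstar ω = if 0 < γ ω then (T ω : ℝ) / (γ ω : ℝ) else 0)
    (hcond : P[Dstar | MeasurableSpace.comap γ inferInstance]
      =ᵐ[P] fun ω => if 0 < γ ω then p else 0)
    (θ00 : ℕ → ℝ)
    (hθint : Integrable (fun ω => θ00 (γ ω)) P)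
    (hθDint : Integrable (fun ω => θ00 (γ ω) * Dstar ω) P) :
    (∫ ω, θ00 (γ ω) * Dstar ω ∂P) - (∫ ω, θ00 (γ ω) ∂P) * (∫ ω, Dstar ω ∂P)
      = ((P {ω | 0 < γ ω}).toReal⁻¹ * (∫ ω in {ω | 0 < γ ω}, θ00 (γ ω) ∂P)
          - (P {ω | γ ω = 0}).toReal⁻¹ * (∫ ω in {ω | γ ω = 0}, θ00 (γ ω) ∂P))
        * p * (1 - (P {ω | 0 < γ ω}).toReal) * (P {ω | 0 < γ ω}).toReal := by
  set A : Set Ω := {ω | 0 < γ ω}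
  have hA : MeasurableSet A := hγmeas MeasurableSet.of_discrete
  have hθ : StronglyMeasurable[MeasurableSpace.comap γ inferInstance] fun ω => θ00 (γ ω) :=
    (measurable_of_countable θ00 |>.comp (comap_measurable γ)).stronglyMeasurable
  have hDratio : Dstar = fun ω => (T ω : ℝ) / γ ω := by
    ext ω
    rw [hDstar]
    split_ifs with h
    · rfl
    · simp [Nat.eq_zero_of_not_pos h]
  have hD : Integrable Dstar P := by
    have hmeas : Measurable Dstar := by
      rw [hDratio]
      fun_prop
    refine .of_bound hmeas.aestronglyMeasurable 1 (ae_of_all _ fun ω => ?_)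
    rw [hDratio, Real.norm_of_nonneg (by positivity)]
    exact div_le_one_of_le₀ (mod_cast hTγ ω) (Nat.cast_nonneg _)
  have hcondA : P[Dstar | MeasurableSpace.comap γ inferInstance] =ᵐ[P] A.indicator fun _ => p :=
    hcond.trans (.of_eq (by ext ω; simp [A, Set.indicator_apply]))
  have hAc : {ω | γ ω = 0} = Aᶜ := by
    ext ω
    simp [A]
  rw [integral_mul_sub_integral_mul_integral_of_condExp_eq_indicator hγmeas.comap_le hA hθ hθint
    hθDint hD hcondA, hAc, setAverage_eq, setAverage_eq, smul_eq_mul, smul_eq_mul,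
    measureReal_def, measureReal_def]

/-- Covariance of the degree-conditional baseline `θ⁰⁰(γ)` with the
imputed fraction `D̄*`:
`Cov(θ⁰⁰(γ), D̄*) = (E[θ⁰⁰(γ) | γ > 0] − E[θ⁰⁰(γ) | γ = 0]) · p · (1 − p_γ) · p_γ`. -/
theorem stmt11
    {Ω : Type*} [MeasurableSpace Ω] (P : Measure Ω) [IsProbabilityMeasure P]
    (p : ℝ) (hp0 : 0 < p) (hp1 : p < 1)
    (γ T : Ω → ℕ) (hγmeas : Measurable γ) (hTmeas : Measurable T)
    (hTγ : ∀ ω, T ω ≤ γ ω)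
    (Dstar : Ω → ℝ)
    (hDstar : ∀ ω, Dstar ω = if 0 < γ ω then (T ω : ℝ) / (γ ω : ℝ) else 0)
    (hcond : P[Dstar | MeasurableSpace.comap γ inferInstance]
      =ᵐ[P] fun ω => if 0 < γ ω then p else 0)
    (hpγ0 : 0 < (P {ω | 0 < γ ω}).toReal) (hpγ1 : (P {ω | 0 < γ ω}).toReal < 1)
    (θ00 : ℕ → ℝ)
    (hθint : Integrable (fun ω => θ00 (γ ω)) P)
    (hθDint : Integrable (fun ω => θ00 (γ ω) * Dstar ω) P) :
    (∫ ω, θ00 (γ ω) * Dstar ω ∂P) - (∫ ω, θ00 (γ ω) ∂P) * (∫ ω, Dstar ω ∂P)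
      = ((P {ω | 0 < γ ω}).toReal⁻¹ * (∫ ω in {ω | 0 < γ ω}, θ00 (γ ω) ∂P)
          - (P {ω | γ ω = 0}).toReal⁻¹ * (∫ ω in {ω | γ ω = 0}, θ00 (γ ω) ∂P))
        * p * (1 - (P {ω | 0 < γ ω}).toReal) * (P {ω | 0 < γ ω}).toReal :=
  stmt11_general P p γ T hγmeas hTmeas hTγ Dstar hDstar hcond θ00 hθint hθDint
end

section
/- Let (Ω,F,P) be a probability space, p ∈ (0,1), D : Ω → ℝ taking values in {0,1} with P(D = 1) = p, and γ, T : Ω → ℕ with T ≤ γ pointwise. Define D̄*(ω) = T(ω)/γ(ω) if γ(ω) > 0 and D̄*(ω) = 0 otherwise. Assume D is independent of (γ, T), E[D̄* | σ(γ)] = p·1{γ > 0} almost surely, and let p_γ := P(γ > 0) with 0 < p_γ < 1. Then for any μᵈᵉ : ℕ → ℝ with the relevant products integrable, Cov(μᵈᵉ(γ)·D, D̄*) = ( E[μᵈᵉ(γ) | γ > 0] − E[μᵈᵉ(γ) | γ = 0] ) · p² · p_γ · (1 − p_γ). -/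
open MeasureTheory ProbabilityTheory

/-!
By independence of `D` from `(γ, T)`, the factor `D` contributes `E[D] = p` to both
`E[μᵈᵉ(γ) D D̄*]` and `E[μᵈᵉ(γ) D]`. Pulling the `σ(γ)`-measurable factor `μᵈᵉ(γ)` out of the
conditional expectation of `D̄*` gives `E[μᵈᵉ(γ) D̄*] = p E[μᵈᵉ(γ); γ > 0]`, and in particular
`E[D̄*] = p p_γ`. The covariance is therefore `p² Cov(μᵈᵉ(γ), 1{γ > 0})`, and the covariance of
any `f` with the indicator of an event `A` is `P(A) P(Aᶜ) (E[f | A] - E[f | Aᶜ])`.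
-/

noncomputable def imputedFraction (x : ℕ × ℕ) : ℝ :=
  if 0 < x.1 then (x.2 : ℝ) / x.1 else 0

lemma norm_imputedFraction_le_one {x : ℕ × ℕ} (h : x.2 ≤ x.1) : ‖imputedFraction x‖ ≤ 1 := by
  unfold imputedFraction
  split_ifs with hpos
  · rw [Real.norm_of_nonneg (by positivity), div_le_one (by exact_mod_cast hpos)]
    exact_mod_cast h
  · simp

lemma integrable_imputedFraction_comp {Ω : Type*} [MeasurableSpace Ω] {μ : Measure Ω}
    [IsFiniteMeasure μ] {γ T : Ω → ℕ} (hγ : Measurable γ) (hT : Measurable T)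
    (hTγ : ∀ ω, T ω ≤ γ ω) : Integrable (fun ω => imputedFraction (γ ω, T ω)) μ :=
  (integrable_const 1).mono'
    ((measurable_of_countable imputedFraction).comp (hγ.prodMk hT)).aestronglyMeasurable
    (.of_forall fun ω => norm_imputedFraction_le_one (hTγ ω))

lemma eq_indicator_of_eq_zero_or_one {Ω : Type*} {D : Ω → ℝ} (h01 : ∀ ω, D ω = 0 ∨ D ω = 1) :
    D = {ω | D ω = 1}.indicator 1 := by
  funext ω
  rcases h01 ω with h | h <;> simp [h]

lemma integral_eq_measureReal_of_eq_zero_or_one {Ω : Type*} [MeasurableSpace Ω] {μ : Measure Ω}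
    {D : Ω → ℝ} (hD : Measurable D) (h01 : ∀ ω, D ω = 0 ∨ D ω = 1) :
    ∫ ω, D ω ∂μ = μ.real {ω | D ω = 1} := by
  conv_lhs => rw [eq_indicator_of_eq_zero_or_one h01]
  exact integral_indicator_one (hD (measurableSet_singleton 1))

lemma ProbabilityTheory.IndepFun.integral_mul_comp {Ω β : Type*} [MeasurableSpace Ω] [MeasurableSpace β]
    {μ : Measure Ω} {X : Ω → ℝ} {Y : Ω → β} (hXY : IndepFun X Y μ)
    (hX : AEStronglyMeasurable X μ) (hY : Measurable Y) {φ : β → ℝ} (hφ : Measurable φ) :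
    ∫ ω, X ω * φ (Y ω) ∂μ = (∫ ω, X ω ∂μ) * ∫ ω, φ (Y ω) ∂μ :=
  (hXY.comp measurable_id hφ).integral_fun_mul_eq_mul_integral hX (hφ.comp hY).aestronglyMeasurable

lemma integral_mul_eq_const_mul_setIntegral_of_condExp_ae_eq_indicator
    {Ω : Type*} {m m0 : MeasurableSpace Ω} {μ : Measure[m0] Ω} [IsFiniteMeasure μ] (hm : m ≤ m0)
    {f g : Ω → ℝ} {s : Set Ω} {c : ℝ} (hs : MeasurableSet s) (hg : StronglyMeasurable[m] g)
    (hf : Integrable f μ) (hgf : Integrable (fun ω => g ω * f ω) μ)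
    (hfs : μ[f | m] =ᵐ[μ] s.indicator fun _ => c) :
    ∫ ω, g ω * f ω ∂μ = c * ∫ ω in s, g ω ∂μ := by
  have hpull : μ[g * f | m] =ᵐ[μ] s.indicator fun ω => c * g ω := by
    filter_upwards [condExp_mul_of_stronglyMeasurable_left hg hgf hf, hfs] with ω hpull hfs
    rw [hpull, Pi.mul_apply, hfs]
    by_cases hωs : ω ∈ s <;> simp [hωs, mul_comm]
  change ∫ ω, (g * f) ω ∂μ = _
  rw [← integral_condExp hm, integral_congr_ae hpull, integral_indicator hs, integral_const_mul]

lemma setIntegral_sub_measureReal_mul_integral {Ω : Type*} [MeasurableSpace Ω] {μ : Measure Ω}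
    [IsProbabilityMeasure μ] {f : Ω → ℝ} {s : Set Ω} (hs : MeasurableSet s) (hf : Integrable f μ) :
    ∫ ω in s, f ω ∂μ - μ.real s * ∫ ω, f ω ∂μ
      = ((⨍ ω in s, f ω ∂μ) - ⨍ ω in sᶜ, f ω ∂μ) * μ.real s * (1 - μ.real s) := by
  have h_avg := measure_smul_setAverage f (measure_ne_top μ s)
  have h_avg_compl := measure_smul_setAverage f (measure_ne_top μ sᶜ)
  rw [smul_eq_mul] at h_avg h_avg_compl
  rw [probReal_compl_eq_one_sub hs] at h_avg_compl
  rw [← integral_add_compl hs hf]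
  linear_combination (-(1 - μ.real s)) * h_avg + μ.real s * h_avg_compl

theorem stmt12_general
    {Ω : Type*} [MeasurableSpace Ω] (P : Measure Ω) [IsProbabilityMeasure P]
    (p : ℝ) (hp0 : 0 < p)
    (D : Ω → ℝ) (hDmeas : Measurable D) (hD01 : ∀ ω, D ω = 0 ∨ D ω = 1)
    (hDp : P {ω | D ω = 1} = ENNReal.ofReal p)
    (γ T : Ω → ℕ) (hγmeas : Measurable γ) (hTmeas : Measurable T)
    (hTγ : ∀ ω, T ω ≤ γ ω)
    (Dstar : Ω → ℝ)
    (hDstar : ∀ ω, Dstar ω = if 0 < γ ω then (T ω : ℝ) / (γ ω : ℝ) else 0)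
    (hindep : IndepFun D (fun ω => (γ ω, T ω)) P)
    (hcond : P[Dstar | MeasurableSpace.comap γ inferInstance]
      =ᵐ[P] fun ω => if 0 < γ ω then p else 0)
    (μde : ℕ → ℝ)
    (hμint : Integrable (fun ω => μde (γ ω)) P)
    (hμDstarint : Integrable (fun ω => μde (γ ω) * Dstar ω) P) :
    (∫ ω, (μde (γ ω) * D ω) * Dstar ω ∂P)
        - (∫ ω, μde (γ ω) * D ω ∂P) * (∫ ω, Dstar ω ∂P)
      = ((P {ω | 0 < γ ω}).toReal⁻¹ * (∫ ω in {ω | 0 < γ ω}, μde (γ ω) ∂P)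
          - (P {ω | γ ω = 0}).toReal⁻¹ * (∫ ω in {ω | γ ω = 0}, μde (γ ω) ∂P))
        * p ^ 2 * (P {ω | 0 < γ ω}).toReal * (1 - (P {ω | 0 < γ ω}).toReal) := by
  obtain rfl : Dstar = fun ω => imputedFraction (γ ω, T ω) := funext hDstar
  set A := {ω | 0 < γ ω}
  have hA : MeasurableSet A := hγmeas (MeasurableSet.of_discrete (s := {n : ℕ | 0 < n}))
  have hAc : Aᶜ = {ω | γ ω = 0} := by ext ω; simp [A, Nat.pos_iff_ne_zero]
  have hED : ∫ ω, D ω ∂P = p := by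
    rw [integral_eq_measureReal_of_eq_zero_or_one hDmeas hD01, measureReal_def, hDp,
      ENNReal.toReal_ofReal hp0.le]
  have hE_indep (φ : ℕ × ℕ → ℝ) : ∫ ω, D ω * φ (γ ω, T ω) ∂P = p * ∫ ω, φ (γ ω, T ω) ∂P := by
    rw [← hED]
    exact hindep.integral_mul_comp hDmeas.aestronglyMeasurable (hγmeas.prodMk hTmeas)
      (measurable_of_countable φ)
  have hDstar_int := integrable_imputedFraction_comp (μ := P) hγmeas hTmeas hTγ
  have hE_cond (g : ℕ → ℝ) (hg : Integrable (fun ω => g (γ ω) * imputedFraction (γ ω, T ω)) P) :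
      ∫ ω, g (γ ω) * imputedFraction (γ ω, T ω) ∂P = p * ∫ ω in A, g (γ ω) ∂P :=
    integral_mul_eq_const_mul_setIntegral_of_condExp_ae_eq_indicator hγmeas.comap_le hA
      ((measurable_of_countable g).comp (comap_measurable γ)).stronglyMeasurable hDstar_int hg
      (hcond.trans (.of_forall fun ω => by simp [A, Set.indicator_apply]))
  have hE_μDDstar : ∫ ω, μde (γ ω) * D ω * imputedFraction (γ ω, T ω) ∂P
      = p * (p * ∫ ω in A, μde (γ ω) ∂P) := by
    simp_rw [mul_comm (μde _) (D _), mul_assoc]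
    rw [hE_indep (fun x => μde x.1 * imputedFraction x), hE_cond μde hμDstarint]
  have hE_μD : ∫ ω, μde (γ ω) * D ω ∂P = p * ∫ ω, μde (γ ω) ∂P := by
    simp_rw [mul_comm (μde _) (D _)]
    exact hE_indep (fun x => μde x.1)
  have hE_Dstar : ∫ ω, imputedFraction (γ ω, T ω) ∂P = p * P.real A := by
    simpa using hE_cond 1 (by simpa using hDstar_int)
  have hcov := setIntegral_sub_measureReal_mul_integral hA hμint
  rw [setAverage_eq, setAverage_eq, smul_eq_mul, smul_eq_mul, hAc] at hcov
  rw [hE_μDDstar, hE_μD, hE_Dstar, ← measureReal_def, ← measureReal_def]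
  linear_combination p ^ 2 * hcov

/-- Covariance of `μᵈᵉ(γ)·D` with the imputed fraction `D̄*`:
`Cov(μᵈᵉ(γ)·D, D̄*) = (E[μᵈᵉ(γ) | γ > 0] − E[μᵈᵉ(γ) | γ = 0]) · p² · p_γ · (1 − p_γ)`. -/
theorem stmt12
    {Ω : Type*} [MeasurableSpace Ω] (P : Measure Ω) [IsProbabilityMeasure P]
    (p : ℝ) (hp0 : 0 < p) (hp1 : p < 1)
    (D : Ω → ℝ) (hDmeas : Measurable D) (hD01 : ∀ ω, D ω = 0 ∨ D ω = 1)
    (hDp : P {ω | D ω = 1} = ENNReal.ofReal p)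
    (γ T : Ω → ℕ) (hγmeas : Measurable γ) (hTmeas : Measurable T)
    (hTγ : ∀ ω, T ω ≤ γ ω)
    (Dstar : Ω → ℝ)
    (hDstar : ∀ ω, Dstar ω = if 0 < γ ω then (T ω : ℝ) / (γ ω : ℝ) else 0)
    (hindep : IndepFun D (fun ω => (γ ω, T ω)) P)
    (hcond : P[Dstar | MeasurableSpace.comap γ inferInstance]
      =ᵐ[P] fun ω => if 0 < γ ω then p else 0)
    (hpγ0 : 0 < (P {ω | 0 < γ ω}).toReal) (hpγ1 : (P {ω | 0 < γ ω}).toReal < 1)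
    (μde : ℕ → ℝ)
    (hμint : Integrable (fun ω => μde (γ ω)) P)
    (hμDint : Integrable (fun ω => μde (γ ω) * D ω) P)
    (hμDDint : Integrable (fun ω => μde (γ ω) * D ω * Dstar ω) P)
    (hμDstarint : Integrable (fun ω => μde (γ ω) * Dstar ω) P) :
    (∫ ω, (μde (γ ω) * D ω) * Dstar ω ∂P)
        - (∫ ω, μde (γ ω) * D ω ∂P) * (∫ ω, Dstar ω ∂P)
      = ((P {ω | 0 < γ ω}).toReal⁻¹ * (∫ ω in {ω | 0 < γ ω}, μde (γ ω) ∂P)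
          - (P {ω | γ ω = 0}).toReal⁻¹ * (∫ ω in {ω | γ ω = 0}, μde (γ ω) ∂P))
        * p ^ 2 * (P {ω | 0 < γ ω}).toReal * (1 - (P {ω | 0 < γ ω}).toReal) :=
  stmt12_general P p hp0 D hDmeas hD01 hDp γ T hγmeas hTmeas hTγ Dstar hDstar hindep hcond μde hμint
    hμDstarint
end
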